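/- arXiv:1110.2897 — 9 statements merged into one kernel-verified Lean document; each statement's English description precedes it below -/
import Mathlib

section
/- Let Z ∈ ℝ^{n×k} satisfy ZᵀZ = I_k and have no zero rows, and let E ∈ ℝ^{m×n} satisfy E Z = 0. Perform RandomizedSampling with r ≥ 1 draws using the probabilities p_i = ‖Z_{(i)}‖₂²/k (where Z_{(i)} is the i-th row of Z), producing Ω ∈ ℝ^{n×r} and diagonal S ∈ ℝ^{r×r}. Then E[‖E Ω S Sᵀ Ωᵀ Z‖_F²] ≤ (k/r) ‖E‖_F². -/
open Matrix MeasureTheory ProbabilityTheory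

/-- Squared Frobenius norm of a real matrix. -/
noncomputable def frobSq {m n : ℕ} (M : Matrix (Fin m) (Fin n) ℝ) : ℝ :=
  ∑ i, ∑ j, (M i j) ^ 2

/-- The sampling matrix Ω ∈ ℝ^{n×r} determined by the sampled indices f t:
Ω_{f t, t} = 1 and all other entries are 0. -/
def samplingMatrix {n r : ℕ} (f : Fin r → Fin n) : Matrix (Fin n) (Fin r) ℝ :=
  fun i t => if f t = i then 1 else 0

/-- The diagonal rescaling matrix S ∈ ℝ^{r×r} with S_{tt} = 1/√(r * p (f t)). -/
noncomputable def rescalingMatrix {n : ℕ} (r : ℕ) (p : Fin n → ℝ) (f : Fin r → Fin n) :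
    Matrix (Fin r) (Fin r) ℝ :=
  Matrix.diagonal fun t => 1 / Real.sqrt (r * p (f t))

lemma entry_formula {m n k r : ℕ} (p : Fin n → ℝ) (hp : ∀ i, 0 ≤ p i)
    (E : Matrix (Fin m) (Fin n) ℝ) (Z : Matrix (Fin n) (Fin k) ℝ)
    (f : Fin r → Fin n) (a : Fin m) (b : Fin k) :
    (E * samplingMatrix f * rescalingMatrix r p f * (rescalingMatrix r p f)ᵀ *
      (samplingMatrix f)ᵀ * Z) a b
      = ∑ t, E a (f t) * Z (f t) b * (1 / (r * p (f t))) := by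
  simp only [rescalingMatrix, Matrix.diagonal_transpose, Matrix.mul_assoc,
    Matrix.diagonal_mul_diagonal]
  simp only [Matrix.mul_apply, samplingMatrix, Matrix.transpose_apply,
    Matrix.diagonal_apply, ite_mul, mul_ite, mul_zero, zero_mul, mul_one,
    Finset.sum_ite_eq, Finset.sum_ite_eq', Finset.mem_univ, if_true]
  simp only [Finset.mul_sum, mul_ite, mul_zero]
  rw [Finset.sum_comm]
  refine Finset.sum_congr rfl fun t _ => ?_
  rw [Finset.sum_ite_eq, if_pos (Finset.mem_univ _)]
  have hc : (0:ℝ) ≤ (r : ℝ) * p (f t) := mul_nonneg (Nat.cast_nonneg r) (hp _)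
  have : (1 / Real.sqrt ((r:ℝ) * p (f t))) * (1 / Real.sqrt ((r:ℝ) * p (f t)))
      = 1 / ((r:ℝ) * p (f t)) := by
    rw [div_mul_div_comm, one_mul, Real.mul_self_sqrt hc]
  rw [one_mul, this]
  ring

lemma integrable_comp_tuple {n r : ℕ} {Ω' : Type} [MeasurableSpace Ω'] (μ : Measure Ω')
    [IsProbabilityMeasure μ] (idx : Fin r → Ω' → Fin n) (hmeas : ∀ t, Measurable (idx t))
    (F : (Fin r → Fin n) → ℝ) : Integrable (fun ω => F (fun t => idx t ω)) μ := by
  refine Integrable.mono' (integrable_const (∑ u : Fin r → Fin n, |F u|)) ?_ ?_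
  · exact ((measurable_of_countable F).comp (measurable_pi_lambda _ hmeas)).aestronglyMeasurable
  · filter_upwards with ω
    simp only [Real.norm_eq_abs]
    exact Finset.single_le_sum (fun u _ => abs_nonneg (F u)) (Finset.mem_univ _)

lemma integrable_comp_idx {n : ℕ} {Ω' : Type} [MeasurableSpace Ω'] (μ : Measure Ω')
    [IsProbabilityMeasure μ] (X : Ω' → Fin n) (hX : Measurable X) (h : Fin n → ℝ) :
    Integrable (fun ω => h (X ω)) μ := by
  refine Integrable.mono' (integrable_const (∑ i, |h i|)) ?_ ?_
  · exact ((measurable_of_countable h).comp hX).aestronglyMeasurable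
  · filter_upwards with ω
    simp only [Real.norm_eq_abs]
    exact Finset.single_le_sum (fun i _ => abs_nonneg (h i)) (Finset.mem_univ _)

lemma integral_comp_idx {n : ℕ} {Ω' : Type} [MeasurableSpace Ω'] (μ : Measure Ω')
    [IsProbabilityMeasure μ] (X : Ω' → Fin n) (hX : Measurable X)
    (p : Fin n → ℝ) (hp : ∀ i, 0 ≤ p i)
    (hlaw : ∀ i, μ {ω | X ω = i} = ENNReal.ofReal (p i)) (h : Fin n → ℝ) :
    ∫ ω, h (X ω) ∂μ = ∑ i, p i * h i := by
  have hset : ∀ i : Fin n, MeasurableSet {ω | X ω = i} := fun i =>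
    hX (measurableSet_singleton i)
  have hpt : (fun ω => h (X ω))
      = fun ω => ∑ i, Set.indicator {ω' | X ω' = i} (fun _ => h i) ω := by
    funext ω
    rw [Finset.sum_eq_single (X ω)]
    · simp [Set.indicator_of_mem, Set.mem_setOf_eq]
    · intro i _ hi
      exact Set.indicator_of_notMem (by simpa using fun hc => hi hc.symm) _
    · exact fun hc => absurd (Finset.mem_univ _) hc
  rw [hpt, integral_finset_sum]
  · refine Finset.sum_congr rfl fun i _ => ?_
    rw [integral_indicator_const _ (hset i), measureReal_def, hlaw i, ENNReal.toReal_ofReal (hp i),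
      smul_eq_mul]
  · exact fun i _ => (integrable_const (h i)).indicator (hset i)

/-- Matrix-multiplication-type bound for randomized sampling: if E Z = 0 and the
sampling probabilities are p_i = ‖Z_(i)‖₂²/k for an orthonormal Z, then
E[‖E Ω S Sᵀ Ωᵀ Z‖_F²] ≤ (k/r) ‖E‖_F². -/
theorem expected_matrix_mult_error {m n k r : ℕ} (hr : 1 ≤ r)
    (Z : Matrix (Fin n) (Fin k) ℝ) (hZ : Zᵀ * Z = 1)
    (hZrows : ∀ i, ∃ j, Z i j ≠ 0)
    (E : Matrix (Fin m) (Fin n) ℝ) (hE : E * Z = 0)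
    (p : Fin n → ℝ) (hp : ∀ i, p i = (∑ j, (Z i j) ^ 2) / k)
    {Ω' : Type} [MeasurableSpace Ω'] (μ : Measure Ω') [IsProbabilityMeasure μ]
    (idx : Fin r → Ω' → Fin n) (hmeas : ∀ t, Measurable (idx t))
    (hindep : iIndepFun idx μ)
    (hlaw : ∀ t i, μ {ω | idx t ω = i} = ENNReal.ofReal (p i)) :
    ∫ ω, frobSq (E * samplingMatrix (fun t => idx t ω) *
        rescalingMatrix r p (fun t => idx t ω) *
        (rescalingMatrix r p (fun t => idx t ω))ᵀ *
        (samplingMatrix (fun t => idx t ω))ᵀ * Z) ∂μ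
      ≤ (k / r : ℝ) * frobSq E := by
  -- positivity of p
  have hk : ∀ i : Fin n, 0 < (k : ℝ) := by
    intro i
    obtain ⟨j, _⟩ := hZrows i
    have : k ≠ 0 := by rintro rfl; exact j.elim0
    exact_mod_cast Nat.pos_of_ne_zero this
  have hppos : ∀ i, 0 < p i := by
    intro i
    obtain ⟨j, hj⟩ := hZrows i
    rw [hp i]
    refine div_pos ?_ (hk i)
    refine Finset.sum_pos' (fun j' _ => sq_nonneg _) ⟨j, Finset.mem_univ j, ?_⟩
    positivity
  have hpnn : ∀ i, 0 ≤ p i := fun i => (hppos i).le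
  have hrpos : (0:ℝ) < (r:ℝ) := by exact_mod_cast hr
  -- abbreviation
  set g : Fin m → Fin k → Fin n → ℝ :=
    fun a b i => E a i * Z i b * (1 / (r * p i)) with hg
  -- rewrite the integrand
  have key : ∀ ω, frobSq (E * samplingMatrix (fun t => idx t ω) *
        rescalingMatrix r p (fun t => idx t ω) *
        (rescalingMatrix r p (fun t => idx t ω))ᵀ *
        (samplingMatrix (fun t => idx t ω))ᵀ * Z)
      = ∑ a, ∑ b, (∑ t, g a b (idx t ω)) * (∑ t, g a b (idx t ω)) := by
    intro ω
    unfold frobSq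
    refine Finset.sum_congr rfl fun a _ => Finset.sum_congr rfl fun b _ => ?_
    rw [entry_formula p hpnn E Z, sq]
  simp only [key]
  -- mean of g is zero
  have hmean : ∀ (a : Fin m) (b : Fin k) (t : Fin r),
      ∫ ω, g a b (idx t ω) ∂μ = 0 := by
    intro a b t
    rw [integral_comp_idx μ (idx t) (hmeas t) p hpnn (hlaw t)]
    have : ∀ i : Fin n, p i * g a b i = E a i * Z i b * (1/(r:ℝ)) := by
      intro i
      rw [hg]
      field_simp
      rw [div_eq_iff (hppos i).ne']
      ring
    rw [Finset.sum_congr rfl fun i _ => this i, ← Finset.sum_mul]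
    have : (∑ i, E a i * Z i b) = (E * Z) a b := (Matrix.mul_apply).symm
    rw [this, hE]
    simp
  -- integral of product
  have hprod : ∀ (a : Fin m) (b : Fin k) (s t : Fin r),
      ∫ ω, g a b (idx s ω) * g a b (idx t ω) ∂μ
        = if s = t then ∑ i, p i * (g a b i)^2 else 0 := by
    intro a b s t
    by_cases hst : s = t
    · subst hst
      rw [if_pos rfl]
      have h2 := integral_comp_idx μ (idx s) (hmeas s) p hpnn (hlaw s)
        (fun i => (g a b i)^2)
      rw [← h2]
      refine integral_congr_ae (Filter.Eventually.of_forall fun ω => ?_)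
      simp [pow_two]
    · rw [if_neg hst]
      have hind : IndepFun (g a b ∘ idx s) (g a b ∘ idx t) μ :=
        (hindep.indepFun hst).comp (measurable_of_countable _) (measurable_of_countable _)
      have h1 : Integrable (g a b ∘ idx s) μ :=
        integrable_comp_idx μ (idx s) (hmeas s) (g a b)
      have h2 : Integrable (g a b ∘ idx t) μ :=
        integrable_comp_idx μ (idx t) (hmeas t) (g a b)
      calc ∫ ω, g a b (idx s ω) * g a b (idx t ω) ∂μ
          = ∫ ω, ((g a b ∘ idx s) * (g a b ∘ idx t)) ω ∂μ := rfl
        _ = (∫ ω, (g a b ∘ idx s) ω ∂μ) * ∫ ω, (g a b ∘ idx t) ω ∂μ :=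
            hind.integral_mul_eq_mul_integral h1.aestronglyMeasurable h2.aestronglyMeasurable
        _ = 0 := by
            have hs0 : (∫ ω, (g a b ∘ idx s) ω ∂μ) = 0 := hmean a b s
            rw [hs0, zero_mul]
  -- push integral through the sums
  rw [integral_finset_sum _ (fun a _ => integrable_comp_tuple μ idx hmeas
    (fun v => ∑ b, (∑ t, g a b (v t)) * (∑ t, g a b (v t))))]
  have step : ∀ a : Fin m,
      ∫ ω, ∑ b, (∑ t, g a b (idx t ω)) * (∑ t, g a b (idx t ω)) ∂μ
        = ∑ b, ∑ t : Fin r, ∑ i, p i * (g a b i)^2 := by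
    intro a
    rw [integral_finset_sum _ (fun b _ => integrable_comp_tuple μ idx hmeas
      (fun v => (∑ t, g a b (v t)) * (∑ t, g a b (v t))))]
    refine Finset.sum_congr rfl fun b _ => ?_
    have expand : (fun ω => (∑ t, g a b (idx t ω)) * (∑ t, g a b (idx t ω)))
        = fun ω => ∑ s : Fin r, ∑ t : Fin r, g a b (idx s ω) * g a b (idx t ω) := by
      funext ω
      rw [Finset.sum_mul_sum]
    rw [expand, integral_finset_sum _ (fun s _ => integrable_comp_tuple μ idx hmeas
      (fun v => ∑ t : Fin r, g a b (v s) * g a b (v t)))]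
    refine Finset.sum_congr rfl fun s _ => ?_
    rw [integral_finset_sum _ (fun t _ => integrable_comp_tuple μ idx hmeas
      (fun v => g a b (v s) * g a b (v t)))]
    simp only [hprod a b s]
    simp
  simp only [step]
  -- final algebraic computation
  have alg : ∀ a : Fin m,
      (∑ b, ∑ _t : Fin r, ∑ i, p i * (g a b i)^2)
        = ∑ i, ((k:ℝ)/r) * (E a i)^2 := by
    intro a
    have hZrow : ∀ i : Fin n, (k:ℝ) * p i = ∑ b, (Z i b)^2 := by
      intro i
      rw [hp i, mul_comm, div_mul_cancel₀ _ (hk i).ne']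
    calc (∑ b, ∑ _t : Fin r, ∑ i, p i * (g a b i)^2)
        = ∑ b, ∑ i, (r:ℝ) * (p i * (g a b i)^2) := by
          refine Finset.sum_congr rfl fun b _ => ?_
          rw [Finset.sum_const, Finset.card_univ, Fintype.card_fin, nsmul_eq_mul,
            Finset.mul_sum]
      _ = ∑ i, ∑ b, (r:ℝ) * (p i * (g a b i)^2) := Finset.sum_comm
      _ = ∑ i, ((k:ℝ)/r) * (E a i)^2 := by
          refine Finset.sum_congr rfl fun i _ => ?_
          have h1 : p i ≠ 0 := (hppos i).ne'
          have h2 : (r:ℝ) ≠ 0 := hrpos.ne'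
          have hb : ∀ b : Fin k, (r:ℝ) * (p i * (g a b i)^2)
              = (Z i b)^2 * ((E a i)^2 / ((r:ℝ) * p i)) := by
            intro b
            rw [hg]
            field_simp
          rw [Finset.sum_congr rfl fun b _ => hb b, ← Finset.sum_mul, ← hZrow i]
          field_simp
  simp only [alg]
  have : frobSq E = ∑ i : Fin m, ∑ j : Fin n, (E i j)^2 := rfl
  rw [this, Finset.mul_sum]
  refine le_of_eq (Finset.sum_congr rfl fun a _ => ?_)
  rw [← Finset.mul_sum]
end

section
/- Let Q ∈ ℝ^{n×k} with n > k satisfy QᵀQ = I_k, let Θ ∈ ℝ^{n×r} with r > k, and let 0 < ε < 1/3. Assume that 1 − ε ≤ σ_i²(QᵀΘ) ≤ 1 + ε for every i ∈ {1,…,k}. Then ‖(QᵀΘ)⁺ − (QᵀΘ)ᵀ‖₂ ≤ 1.5 ε. -/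
open Matrix

/-- The squared singular values of a real k×r matrix M, i.e. the eigenvalues of M Mᴴ
(for real matrices Mᴴ = Mᵀ, and the eigenvalues of M Mᵀ are the squares of the
singular values σ_1(M), …, σ_k(M)). -/
noncomputable def singValSq {k r : ℕ} (M : Matrix (Fin k) (Fin r) ℝ) : Fin k → ℝ :=
  (Matrix.isHermitian_mul_conjTranspose_self M).eigenvalues

/-- The spectral norm of a real matrix: the supremum of ‖Mx‖₂ over unit vectors x. -/
noncomputable def specNorm {m n : ℕ} (M : Matrix (Fin m) (Fin n) ℝ) : ℝ :=
  sSup {c : ℝ | ∃ x : Fin n → ℝ, (∑ j, (x j) ^ 2) = 1 ∧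
    c = Real.sqrt (∑ i, (∑ j, M i j * x j) ^ 2)}

lemma real_conjTranspose_eq {a b : ℕ} (X : Matrix (Fin a) (Fin b) ℝ) : Xᴴ = Xᵀ := by
  ext i j; simp [conjTranspose_apply]

lemma quad_bound {k : ℕ} (S : Matrix (Fin k) (Fin k) ℝ) (hS : S.IsHermitian)
    (c : ℝ) (hd : ∀ i, hS.eigenvalues i + (hS.eigenvalues i)⁻¹ - 2 ≤ c)
    (hpos : ∀ i, 0 < hS.eigenvalues i) :
    (c • (1 : Matrix (Fin k) (Fin k) ℝ) - (S + S⁻¹ - (2:ℝ) • 1)).PosSemidef := by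
  classical
  set μ := hS.eigenvalues with hμ
  set V : Matrix (Fin k) (Fin k) ℝ := (hS.eigenvectorUnitary : Matrix (Fin k) (Fin k) ℝ) with hVdef
  have hV1 : V * star V = 1 := mem_unitaryGroup_iff.mp hS.eigenvectorUnitary.2
  have hV2 : star V * V = 1 := mem_unitaryGroup_iff'.mp hS.eigenvectorUnitary.2
  have hspec : S = V * diagonal μ * star V := by
    have := hS.spectral_theorem
    rwa [RCLike.ofReal_real_eq_id, Function.id_comp] at this
  have hdd : diagonal μ * diagonal (fun i => (μ i)⁻¹) = 1 := by
    rw [diagonal_mul_diagonal]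
    have : (fun i => μ i * (μ i)⁻¹) = fun _ => (1:ℝ) := by
      funext i; exact mul_inv_cancel₀ (hpos i).ne'
    rw [this, diagonal_one]
  have hSinv : S⁻¹ = V * diagonal (fun i => (μ i)⁻¹) * star V := by
    apply inv_eq_right_inv
    rw [hspec]
    simp only [Matrix.mul_assoc]
    rw [← Matrix.mul_assoc (star V) V, hV2, Matrix.one_mul,
      ← Matrix.mul_assoc (diagonal μ), hdd, Matrix.one_mul, hV1]
  have hone : (1 : Matrix (Fin k) (Fin k) ℝ) = V * 1 * star V := by
    rw [Matrix.mul_one, hV1]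
  have hdiag : diagonal (fun i => c - (μ i + (μ i)⁻¹ - 2))
      = c • (1 : Matrix (Fin k) (Fin k) ℝ)
        - (diagonal μ + diagonal (fun i => (μ i)⁻¹) - (2:ℝ) • 1) := by
    ext i j
    by_cases h : i = j
    · subst h
      simp [Matrix.diagonal_apply_eq, Matrix.one_apply_eq, Matrix.smul_apply]
    · simp [Matrix.diagonal_apply_ne _ h, Matrix.one_apply_ne h, Matrix.smul_apply]
  have hc1 : V * (c • (1 : Matrix (Fin k) (Fin k) ℝ)) * star V = c • 1 := by
    rw [Matrix.mul_smul, Matrix.smul_mul, Matrix.mul_one, hV1]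
  have hc2 : V * ((2:ℝ) • (1 : Matrix (Fin k) (Fin k) ℝ)) * star V = (2:ℝ) • 1 := by
    rw [Matrix.mul_smul, Matrix.smul_mul, Matrix.mul_one, hV1]
  have key : c • (1 : Matrix (Fin k) (Fin k) ℝ) - (S + S⁻¹ - (2:ℝ) • 1)
      = V * diagonal (fun i => c - (μ i + (μ i)⁻¹ - 2)) * star V := by
    rw [hdiag, Matrix.mul_sub, Matrix.sub_mul, Matrix.mul_sub, Matrix.sub_mul,
      Matrix.mul_add, Matrix.add_mul, ← hspec, ← hSinv, hc1, hc2]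
  rw [key, Matrix.star_eq_conjTranspose V] 
  exact (posSemidef_diagonal_iff.mpr (fun i => by
    simpa using sub_nonneg.mpr (hd i))).mul_mul_conjTranspose_same V


/-- If all squared singular values of QᵀΘ lie in [1 − ε, 1 + ε] for 0 < ε < 1/3,
then the pseudoinverse of QᵀΘ is close to its transpose in spectral norm:
‖(QᵀΘ)⁺ − (QᵀΘ)ᵀ‖₂ ≤ 1.5 ε. -/
theorem pinv_close_to_transpose {n k r : ℕ} (hnk : k < n) (hkr : k < r)
    (Q : Matrix (Fin n) (Fin k) ℝ) (hQ : Qᵀ * Q = 1)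
    (Θ : Matrix (Fin n) (Fin r) ℝ)
    (ε : ℝ) (hε0 : 0 < ε) (hε1 : ε < 1 / 3)
    (hσ : ∀ i, 1 - ε ≤ singValSq (Qᵀ * Θ) i ∧ singValSq (Qᵀ * Θ) i ≤ 1 + ε)
    (P : Matrix (Fin r) (Fin k) ℝ)
    (h1 : (Qᵀ * Θ) * P * (Qᵀ * Θ) = Qᵀ * Θ)
    (h2 : P * (Qᵀ * Θ) * P = P)
    (h3 : ((Qᵀ * Θ) * P)ᵀ = (Qᵀ * Θ) * P)
    (h4 : (P * (Qᵀ * Θ))ᵀ = P * (Qᵀ * Θ)) :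
    specNorm (P - (Qᵀ * Θ)ᵀ) ≤ 1.5 * ε := by
  set M := Qᵀ * Θ with hM
  set S := M * Mᴴ with hSdef
  have hS : S.IsHermitian := Matrix.isHermitian_mul_conjTranspose_self M
  set μ := hS.eigenvalues with hμdef
  have hσ' : ∀ i, 1 - ε ≤ μ i ∧ μ i ≤ 1 + ε := hσ
  have hpos : ∀ i, 0 < μ i := fun i => by have := (hσ' i).1; linarith
  have hST : S = M * Mᵀ := by rw [hSdef, real_conjTranspose_eq]
  -- S invertible
  have hdet : IsUnit S.det := by
    rw [hS.det_eq_prod_eigenvalues]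
    refine isUnit_iff_ne_zero.mpr (ne_of_gt ?_)
    exact Finset.prod_pos (fun i _ => hpos i)
  have hSr : S * S⁻¹ = 1 := Matrix.mul_nonsing_inv S hdet
  have hSl : S⁻¹ * S = 1 := Matrix.nonsing_inv_mul S hdet
  -- M * P = 1
  have hMP : M * P = 1 := by
    have e1 : (M * P) * S = S := by
      rw [hST, ← Matrix.mul_assoc, h1]
    calc M * P = (M * P) * (S * S⁻¹) := by rw [hSr, Matrix.mul_one]
      _ = ((M * P) * S) * S⁻¹ := by rw [← Matrix.mul_assoc]
      _ = S * S⁻¹ := by rw [e1]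
      _ = 1 := hSr
  have hPt : Pᵀ * Mᵀ = 1 := by rw [← Matrix.transpose_mul, hMP, Matrix.transpose_one]
  have hPM : P * M = Mᵀ * Pᵀ := by rw [← h4, Matrix.transpose_mul]
  have hPS : P * S = Mᵀ := by
    rw [hST]
    calc P * (M * Mᵀ) = (P * M) * Mᵀ := by rw [← Matrix.mul_assoc]
      _ = Mᵀ * (Pᵀ * Mᵀ) := by rw [hPM, Matrix.mul_assoc]
      _ = Mᵀ := by rw [hPt, Matrix.mul_one]
  have hP : P = Mᵀ * S⁻¹ := by
    calc P = P * (S * S⁻¹) := by rw [hSr, Matrix.mul_one]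
      _ = (P * S) * S⁻¹ := by rw [← Matrix.mul_assoc]
      _ = Mᵀ * S⁻¹ := by rw [hPS]
  -- Gram matrix computation
  have hSsym : Sᵀ = S := by rw [← real_conjTranspose_eq, hS.eq]
  have hSinvT : (S⁻¹)ᵀ = S⁻¹ := by rw [Matrix.transpose_nonsing_inv, hSsym]
  have hMMT : M * Mᵀ = S := hST.symm
  have hG : (P - Mᵀ)ᵀ * (P - Mᵀ) = S + S⁻¹ - (2:ℝ) • 1 := by
    have hAT : (P - Mᵀ)ᵀ = S⁻¹ * M - M := by
      rw [Matrix.transpose_sub, Matrix.transpose_transpose, hP, Matrix.transpose_mul, hSinvT, Matrix.transpose_transpose]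
    rw [hAT, hP, Matrix.sub_mul, Matrix.mul_sub, Matrix.mul_sub]
    have e1 : (S⁻¹ * M) * (Mᵀ * S⁻¹) = S⁻¹ := by
      rw [Matrix.mul_assoc, ← Matrix.mul_assoc M Mᵀ, hMMT, hSr, Matrix.mul_one]
    have e2 : (S⁻¹ * M) * Mᵀ = 1 := by rw [Matrix.mul_assoc, hMMT, hSl]
    have e3 : M * (Mᵀ * S⁻¹) = 1 := by rw [← Matrix.mul_assoc, hMMT, hSr]
    rw [e1, e2, e3, hMMT, two_smul]
    abel
  -- eigenvalue bound
  have hd : ∀ i, μ i + (μ i)⁻¹ - 2 ≤ (1.5 * ε)^2 := by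
    intro i
    obtain ⟨hl, hu⟩ := hσ' i
    have hμp := hpos i
    have key : (μ i + (μ i)⁻¹ - 2) * μ i = (μ i - 1)^2 := by
      field_simp
      ring
    have h2 : (μ i - 1)^2 ≤ ε^2 := by nlinarith
    have h3 : (μ i + (μ i)⁻¹ - 2) * μ i ≤ ((1.5 * ε)^2) * μ i := by
      rw [key]
      nlinarith [sq_nonneg ε]
    exact le_of_mul_le_mul_right h3 hμp
  have hB := quad_bound S hS ((1.5 * ε)^2) hd hpos
  -- conclude
  unfold specNorm
  apply Real.sSup_le
  · rintro c ⟨x, hx, rfl⟩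
    have hxx : x ⬝ᵥ x = 1 := by simpa [dotProduct, sq] using hx
    have e0 : (∑ i, (∑ j, (P - Mᵀ) i j * x j)^2)
        = ((P - Mᵀ) *ᵥ x) ⬝ᵥ ((P - Mᵀ) *ᵥ x) := by
      simp [Matrix.mulVec, dotProduct, sq]
    have e1 : ((P - Mᵀ) *ᵥ x) ⬝ᵥ ((P - Mᵀ) *ᵥ x)
        = x ⬝ᵥ (((P - Mᵀ)ᵀ * (P - Mᵀ)) *ᵥ x) := by
      rw [Matrix.dotProduct_mulVec, ← Matrix.mulVec_transpose, Matrix.mulVec_mulVec,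
        dotProduct_comm]
    have hquad : x ⬝ᵥ ((S + S⁻¹ - (2:ℝ) • 1) *ᵥ x) ≤ (1.5 * ε)^2 := by
      have h0 : (0:ℝ) ≤ x ⬝ᵥ (((1.5 * ε)^2 • (1 : Matrix (Fin k) (Fin k) ℝ)
          - (S + S⁻¹ - (2:ℝ) • 1)) *ᵥ x) := by simpa using hB.dotProduct_mulVec_nonneg x
      rw [Matrix.sub_mulVec, dotProduct_sub, Matrix.smul_mulVec,
        Matrix.one_mulVec, dotProduct_smul, smul_eq_mul, hxx, mul_one] at h0
      linarith
    calc Real.sqrt (∑ i, (∑ j, (P - Mᵀ) i j * x j)^2)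
        ≤ Real.sqrt ((1.5 * ε)^2) := by
          apply Real.sqrt_le_sqrt
          rw [e0, e1, hG]
          exact hquad
      _ = 1.5 * ε := Real.sqrt_sq (by positivity)
  · positivity
end

section
/- Let A ∈ ℝ^{m×n}, let Z ∈ ℝ^{n×k} satisfy ZᵀZ = I_k, and set E = A − A Z Zᵀ (so that E Z = 0). Let Ω ∈ ℝ^{n×r} and S ∈ ℝ^{r×r} be any matrices such that (Zᵀ Ω S)(Zᵀ Ω S)⁺ = I_k, where (Zᵀ Ω S)⁺ is the Moore–Penrose pseudoinverse. Then A Z Zᵀ = A Ω S (Zᵀ Ω S)⁺ Zᵀ + Ẽ, where Ẽ = −E Ω S (Zᵀ Ω S)⁺ Zᵀ. -/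
open Matrix

/-- Decomposition of A Z Zᵀ via sampled columns: if E = A − A Z Zᵀ (so E Z = 0) and
(Zᵀ Ω S)(Zᵀ Ω S)⁺ = I_k, then A Z Zᵀ = A Ω S (Zᵀ Ω S)⁺ Zᵀ + Ẽ with
Ẽ = −E Ω S (Zᵀ Ω S)⁺ Zᵀ. -/
theorem sampled_low_rank_decomposition {m n k r : ℕ}
    (A : Matrix (Fin m) (Fin n) ℝ)
    (Z : Matrix (Fin n) (Fin k) ℝ) (hZ : Zᵀ * Z = 1)
    (W : Matrix (Fin n) (Fin r) ℝ) (S : Matrix (Fin r) (Fin r) ℝ)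
    (P : Matrix (Fin r) (Fin k) ℝ)
    (h1 : (Zᵀ * W * S) * P * (Zᵀ * W * S) = Zᵀ * W * S)
    (h2 : P * (Zᵀ * W * S) * P = P)
    (h3 : ((Zᵀ * W * S) * P)ᵀ = (Zᵀ * W * S) * P)
    (h4 : (P * (Zᵀ * W * S))ᵀ = P * (Zᵀ * W * S))
    (hinv : (Zᵀ * W * S) * P = 1) :
    A * Z * Zᵀ = A * W * S * P * Zᵀ + (-((A - A * Z * Zᵀ) * W * S * P * Zᵀ)) := by
  have key : A * Z * (Zᵀ * W * S * P) * Zᵀ = A * Z * Zᵀ := by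
    rw [hinv, Matrix.mul_one]
  calc A * Z * Zᵀ = A * Z * (Zᵀ * W * S * P) * Zᵀ := key.symm
    _ = A * W * S * P * Zᵀ + (-((A - A * Z * Zᵀ) * W * S * P * Zᵀ)) := by
        simp only [Matrix.sub_mul, Matrix.mul_assoc]
        abel
end

section
/- Let A ∈ ℝ^{m×n}, let V ∈ ℝ^{n×k} satisfy VᵀV = I_k, set B = A V Vᵀ and E = A − B (so that E V = 0), and let 0 < ε < 1/3. Let R ∈ ℝ^{n×r} with r > k be any matrix such that: (i) 1 − ε ≤ σ_i²(Vᵀ R) ≤ 1 + ε for all i ∈ {1,…,k}; (ii) ‖E R Rᵀ V‖_F ≤ ε ‖E‖_F; and (iii) ‖E R‖_F² ≤ (1 + ε) ‖E‖_F². Then ‖B − A R (Vᵀ R)⁺ Vᵀ‖_F ≤ 3 ε ‖E‖_F. -/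
open Matrix

/-- The Frobenius norm of a real matrix. -/
noncomputable def frobNorm {m n : ℕ} (M : Matrix (Fin m) (Fin n) ℝ) : ℝ :=
  Real.sqrt (frobSq M)

lemma aux_ct {a b : ℕ} (M : Matrix (Fin a) (Fin b) ℝ) : Mᴴ = Mᵀ := by
  ext i j; simp [Matrix.conjTranspose_apply]

lemma aux_frobSq_nonneg {a b : ℕ} (M : Matrix (Fin a) (Fin b) ℝ) : 0 ≤ frobSq M := by
  unfold frobSq; positivity

lemma aux_frobSq_eq_trace {a b : ℕ} (M : Matrix (Fin a) (Fin b) ℝ) :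
    frobSq M = Matrix.trace (M * Mᵀ) := by
  simp [frobSq, Matrix.trace, Matrix.mul_apply, Matrix.diag, sq]

lemma aux_frobSq_mul_orth {a b c : ℕ} (M : Matrix (Fin a) (Fin b) ℝ)
    (W : Matrix (Fin b) (Fin c) ℝ) (hW : W * Wᵀ = 1) :
    frobSq (M * W) = frobSq M := by
  rw [aux_frobSq_eq_trace, aux_frobSq_eq_trace, Matrix.transpose_mul]
  rw [show M * W * (Wᵀ * Mᵀ) = M * (W * Wᵀ) * Mᵀ by simp only [Matrix.mul_assoc], hW,
    Matrix.mul_one]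

lemma aux_frobNorm_mul_orth {a b c : ℕ} (M : Matrix (Fin a) (Fin b) ℝ)
    (W : Matrix (Fin b) (Fin c) ℝ) (hW : W * Wᵀ = 1) :
    frobNorm (M * W) = frobNorm M := by
  rw [frobNorm, frobNorm, aux_frobSq_mul_orth M W hW]

lemma aux_frobSq_mul_diag {a b : ℕ} (M : Matrix (Fin a) (Fin b) ℝ) (d : Fin b → ℝ)
    (c : ℝ) (hc : 0 ≤ c) (hd : ∀ j, c ≤ d j) :
    c ^ 2 * frobSq M ≤ frobSq (M * Matrix.diagonal d) := by
  unfold frobSq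
  rw [Finset.mul_sum]
  refine Finset.sum_le_sum fun i _ => ?_
  rw [Finset.mul_sum]
  refine Finset.sum_le_sum fun j _ => ?_
  rw [Matrix.mul_diagonal, mul_pow]
  have : c ^ 2 ≤ d j ^ 2 := pow_le_pow_left₀ hc (hd j) 2
  nlinarith [sq_nonneg (M i j)]

lemma aux_mul_hermitian_ge {a k : ℕ} {H : Matrix (Fin k) (Fin k) ℝ}
    (hH : H.IsHermitian) {c : ℝ} (hc : 0 ≤ c) (hev : ∀ i, c ≤ hH.eigenvalues i)
    (M : Matrix (Fin a) (Fin k) ℝ) :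
    c * frobNorm M ≤ frobNorm (M * H) := by
  set U : Matrix (Fin k) (Fin k) ℝ := (hH.eigenvectorUnitary : Matrix (Fin k) (Fin k) ℝ)
  have hU1 : U * star U = 1 := (Matrix.mem_unitaryGroup_iff).mp hH.eigenvectorUnitary.2
  have hU2 : star U * U = 1 := (Matrix.mem_unitaryGroup_iff').mp hH.eigenvectorUnitary.2
  have hspec := hH.spectral_theorem
  have hstar : (star U : Matrix (Fin k) (Fin k) ℝ) = Uᵀ := by
    rw [Matrix.star_eq_conjTranspose, aux_ct]
  have hd : (RCLike.ofReal ∘ hH.eigenvalues : Fin k → ℝ) = hH.eigenvalues := by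
    ext i; simp
  have h1 : frobSq (M * H) = frobSq (M * U * Matrix.diagonal hH.eigenvalues) := by
    conv_lhs => rw [hspec]
    rw [hd, Unitary.conjStarAlgAut_apply]
    rw [show M * (U * Matrix.diagonal hH.eigenvalues * star U)
        = (M * U * Matrix.diagonal hH.eigenvalues) * star U by simp only [Matrix.mul_assoc]]
    exact aux_frobSq_mul_orth _ _
      (by rw [hstar, Matrix.transpose_transpose, ← hstar]; exact hU2)
  have h2 : c ^ 2 * frobSq (M * U) ≤ frobSq (M * U * Matrix.diagonal hH.eigenvalues) :=
    aux_frobSq_mul_diag (M * U) _ c hc hev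
  have h3 : frobSq (M * U) = frobSq M := aux_frobSq_mul_orth M U (by rw [← hstar]; exact hU1)
  have h4 : c ^ 2 * frobSq M ≤ frobSq (M * H) := by rw [h1, ← h3]; exact h2
  rw [frobNorm, frobNorm]
  calc c * Real.sqrt (frobSq M) = Real.sqrt (c ^ 2 * frobSq M) := by
        rw [Real.sqrt_mul (by positivity), Real.sqrt_sq hc]
    _ ≤ Real.sqrt (frobSq (M * H)) := Real.sqrt_le_sqrt h4
lemma aux_frobNorm_neg {a b : ℕ} (M : Matrix (Fin a) (Fin b) ℝ) :
    frobNorm (-M) = frobNorm M := by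
  simp [frobNorm, frobSq]
/-- Random-projection-type low rank approximation: with B = A V Vᵀ and E = A − B,
under the stated spectral and Frobenius conditions on R,
‖B − A R (Vᵀ R)⁺ Vᵀ‖_F ≤ 3 ε ‖E‖_F. -/
theorem projection_low_rank_error {m n k r : ℕ} (hkr : k < r)
    (A : Matrix (Fin m) (Fin n) ℝ)
    (V : Matrix (Fin n) (Fin k) ℝ) (hV : Vᵀ * V = 1)
    (ε : ℝ) (hε0 : 0 < ε) (hε1 : ε < 1 / 3)
    (R : Matrix (Fin n) (Fin r) ℝ)
    (hσ : ∀ i, 1 - ε ≤ singValSq (Vᵀ * R) i ∧ singValSq (Vᵀ * R) i ≤ 1 + ε)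
    (hERV : frobNorm ((A - A * V * Vᵀ) * R * Rᵀ * V)
      ≤ ε * frobNorm (A - A * V * Vᵀ))
    (hER : frobSq ((A - A * V * Vᵀ) * R) ≤ (1 + ε) * frobSq (A - A * V * Vᵀ))
    (P : Matrix (Fin r) (Fin k) ℝ)
    (hp1 : (Vᵀ * R) * P * (Vᵀ * R) = Vᵀ * R)
    (hp2 : P * (Vᵀ * R) * P = P)
    (hp3 : ((Vᵀ * R) * P)ᵀ = (Vᵀ * R) * P)
    (hp4 : (P * (Vᵀ * R))ᵀ = P * (Vᵀ * R)) :
    frobNorm (A * V * Vᵀ - A * R * P * Vᵀ) ≤ 3 * ε * frobNorm (A - A * V * Vᵀ) := by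
  set S := Vᵀ * R with hS
  set E := A - A * V * Vᵀ with hE
  have hctS : Sᴴ = Sᵀ := aux_ct S
  have hHerm : (S * Sᴴ).IsHermitian := Matrix.isHermitian_mul_conjTranspose_self S
  have hev : ∀ i, 1 - ε ≤ hHerm.eigenvalues i := fun i => (hσ i).1
  have hc0 : (0:ℝ) ≤ 1 - ε := by linarith
  -- S * Sᴴ is invertible
  have hdet : IsUnit (S * Sᴴ).det := by
    rw [hHerm.det_eq_prod_eigenvalues]
    refine isUnit_iff_ne_zero.mpr (ne_of_gt (Finset.prod_pos fun i _ => ?_))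
    have := hev i
    simp only [RCLike.ofReal_real_eq_id, id]
    linarith
  have hHinv : (S * Sᴴ) * (S * Sᴴ)⁻¹ = 1 := Matrix.mul_nonsing_inv _ hdet
  -- S * P = 1
  have hSP : S * P = 1 := by
    have h1 : (S * P) * (S * Sᴴ) = S * Sᴴ := by
      rw [hctS]
      calc S * P * (S * Sᵀ) = (S * P * S) * Sᵀ := by simp only [Matrix.mul_assoc]
        _ = S * Sᵀ := by rw [hp1]
    calc S * P = (S * P) * ((S * Sᴴ) * (S * Sᴴ)⁻¹) := by rw [hHinv, Matrix.mul_one]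
      _ = ((S * P) * (S * Sᴴ)) * (S * Sᴴ)⁻¹ := by simp only [Matrix.mul_assoc]
      _ = (S * Sᴴ) * (S * Sᴴ)⁻¹ := by rw [h1]
      _ = 1 := hHinv
  -- P * S = Sᵀ * Pᵀ
  have hPS : P * S = Sᵀ * Pᵀ := hp4.symm.trans (Matrix.transpose_mul P S)
  -- P = Sᵀ * (Pᵀ * P)
  have hPeq : P = Sᵀ * (Pᵀ * P) := by
    calc P = P * S * P := hp2.symm
      _ = (Sᵀ * Pᵀ) * P := by rw [hPS]
      _ = Sᵀ * (Pᵀ * P) := by rw [Matrix.mul_assoc]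
  -- (S Sᴴ)(PᵀP) = 1 and (PᵀP)(S Sᴴ) = 1
  have hHN : (S * Sᴴ) * (Pᵀ * P) = 1 := by
    calc S * Sᴴ * (Pᵀ * P) = S * ((Sᵀ * Pᵀ) * P) := by
          rw [hctS]; simp only [Matrix.mul_assoc]
      _ = S * (P * S * P) := by rw [← hPS]
      _ = (S * P) * (S * P) := by simp only [Matrix.mul_assoc]
      _ = 1 := by rw [hSP, Matrix.mul_one]
  have hNH : (Pᵀ * P) * (S * Sᴴ) = 1 := mul_eq_one_comm.mp hHN
  -- key identity: B - A R P Vᵀ = -(E R P Vᵀ)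
  have hAR : A * R = A * V * S + E * R := by
    rw [hE, Matrix.sub_mul, Matrix.mul_assoc (A * V) Vᵀ R, ← hS]
    abel
  have hARP : A * R * P = A * V + E * R * P := by
    calc A * R * P = (A * V * S + E * R) * P := by rw [hAR]
      _ = A * V * (S * P) + E * R * P := by
          rw [Matrix.add_mul, Matrix.mul_assoc (A * V) S P]
      _ = A * V + E * R * P := by rw [hSP, Matrix.mul_one]
  have hkey : A * V * Vᵀ - A * R * P * Vᵀ = -(E * R * P * Vᵀ) := by
    rw [hARP, Matrix.add_mul]
    abel
  -- E R P = (E R Rᵀ V) (Pᵀ P)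
  have hX : E * R * P = (E * R * Rᵀ * V) * (Pᵀ * P) := by
    calc E * R * P = E * R * (Sᵀ * (Pᵀ * P)) := by conv_lhs => rw [hPeq]
      _ = (E * R * Sᵀ) * (Pᵀ * P) := by simp only [Matrix.mul_assoc]
      _ = (E * R * (Rᵀ * V)) * (Pᵀ * P) := by
          rw [hS, Matrix.transpose_mul, Matrix.transpose_transpose]
      _ = (E * R * Rᵀ * V) * (Pᵀ * P) := by simp only [Matrix.mul_assoc]
  have hYH : (E * R * Rᵀ * V * (Pᵀ * P)) * (S * Sᴴ) = E * R * Rᵀ * V := by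
    rw [Matrix.mul_assoc (E * R * Rᵀ * V), hNH, Matrix.mul_one]
  have hge : (1 - ε) * frobNorm (E * R * Rᵀ * V * (Pᵀ * P)) ≤ frobNorm (E * R * Rᵀ * V) := by
    have h := aux_mul_hermitian_ge hHerm hc0 hev (E * R * Rᵀ * V * (Pᵀ * P))
    rwa [hYH] at h
  rw [hkey, aux_frobNorm_neg,
    aux_frobNorm_mul_orth (E * R * P) Vᵀ (by rw [Matrix.transpose_transpose]; exact hV), hX]
  have hnE : 0 ≤ frobNorm E := Real.sqrt_nonneg _
  have hnY : 0 ≤ frobNorm (E * R * Rᵀ * V * (Pᵀ * P)) := Real.sqrt_nonneg _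
  nlinarith [hge, hERV, hnE, hnY, mul_nonneg hε0.le hnE]
end

section
/- Let A ∈ ℝ^{m×n}, let V ∈ ℝ^{n×k} satisfy VᵀV = I_k, and assume A V Vᵀ is a best rank-at-most-k Frobenius approximation of A, i.e., ‖A − A V Vᵀ‖_F ≤ ‖A − B‖_F for every B ∈ ℝ^{m×n} with rank(B) ≤ k. Let 𝒳 be a nonempty finite set of matrices X ∈ ℝ^{m×k} each satisfying XᵀX = I_k. Let X̂ ∈ 𝒳 minimize ‖A V − X Xᵀ A V‖_F over 𝒳 and let X_opt ∈ 𝒳 minimize ‖A − X Xᵀ A‖_F over 𝒳. Then ‖A − X̂ X̂ᵀ A‖_F² ≤ 2 ‖A − X_opt X_optᵀ A‖_F². -/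
open Matrix

lemma frobSq_nonneg {m n : ℕ} (M : Matrix (Fin m) (Fin n) ℝ) : 0 ≤ frobSq M := by
  unfold frobSq; positivity

lemma frobSq_eq_trace {m n : ℕ} (M : Matrix (Fin m) (Fin n) ℝ) :
    frobSq M = (Mᵀ * M).trace := by
  simp only [frobSq, Matrix.trace, Matrix.diag, Matrix.mul_apply, Matrix.transpose_apply, sq]
  rw [Finset.sum_comm]

lemma frobSq_transpose {m n : ℕ} (M : Matrix (Fin m) (Fin n) ℝ) :
    frobSq Mᵀ = frobSq M := by
  simp only [frobSq, Matrix.transpose_apply]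
  rw [Finset.sum_comm]

lemma frobNorm_le_imp {m n : ℕ} {M N : Matrix (Fin m) (Fin n) ℝ}
    (h : frobNorm M ≤ frobNorm N) : frobSq M ≤ frobSq N :=
  (Real.sqrt_le_sqrt_iff (frobSq_nonneg N)).mp h

lemma proj_right {a b : ℕ} (M : Matrix (Fin a) (Fin b) ℝ) (P : Matrix (Fin b) (Fin b) ℝ)
    (hs : Pᵀ = P) (hi : P * P = P) :
    frobSq M = frobSq (M * P) + frobSq (M * (1 - P)) := by
  rw [frobSq_eq_trace, frobSq_eq_trace, frobSq_eq_trace]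
  have h1 : ((M * P)ᵀ * (M * P)).trace = (Mᵀ * M * P).trace := by
    rw [transpose_mul, hs, Matrix.mul_assoc, Matrix.trace_mul_comm P,
      Matrix.mul_assoc, Matrix.mul_assoc, hi, ← Matrix.mul_assoc]
  have hq : (1 - P) * (1 - P) = 1 - P := by
    simp [Matrix.sub_mul, Matrix.mul_sub, hi]
  have h2 : ((M * (1 - P))ᵀ * (M * (1 - P))).trace = (Mᵀ * M * (1 - P)).trace := by
    rw [transpose_mul, show (1 - P)ᵀ = 1 - P by simp [transpose_sub, hs],
      Matrix.mul_assoc, Matrix.trace_mul_comm (1 - P),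
      Matrix.mul_assoc, Matrix.mul_assoc, hq, ← Matrix.mul_assoc]
  rw [h1, h2, ← Matrix.trace_add, ← Matrix.mul_add]
  simp

lemma proj_left {a b : ℕ} (M : Matrix (Fin a) (Fin b) ℝ) (Q : Matrix (Fin a) (Fin a) ℝ)
    (hs : Qᵀ = Q) (hi : Q * Q = Q) :
    frobSq M = frobSq (Q * M) + frobSq ((1 - Q) * M) := by
  have := proj_right Mᵀ Q hs hi
  rw [frobSq_transpose] at this
  rw [this]
  rw [show Mᵀ * Q = (Q * M)ᵀ by rw [transpose_mul, hs],
    show Mᵀ * (1 - Q) = ((1 - Q) * M)ᵀ by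
      rw [transpose_mul, transpose_sub, transpose_one, hs],
    frobSq_transpose, frobSq_transpose]

lemma frobSq_mul_Vt {a b c : ℕ} (M : Matrix (Fin a) (Fin c) ℝ)
    (V : Matrix (Fin b) (Fin c) ℝ) (hV : Vᵀ * V = 1) :
    frobSq (M * Vᵀ) = frobSq M := by
  rw [frobSq_eq_trace, frobSq_eq_trace, transpose_mul, transpose_transpose,
    Matrix.mul_assoc, Matrix.trace_mul_comm V, Matrix.mul_assoc, Matrix.mul_assoc, hV]
  simp [← Matrix.mul_assoc]

/-- SVD feature extraction gives a 2-approximation for k-means: if A V Vᵀ is a best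
rank-at-most-k Frobenius approximation of A, X̂ minimizes the k-means objective on the
projected data A V over the class 𝒳, and X_opt minimizes it on A, then
‖A − X̂ X̂ᵀ A‖_F² ≤ 2 ‖A − X_opt X_optᵀ A‖_F². -/
theorem svd_two_approximation {m n k : ℕ}
    (A : Matrix (Fin m) (Fin n) ℝ)
    (V : Matrix (Fin n) (Fin k) ℝ) (hV : Vᵀ * V = 1)
    (hbest : ∀ B : Matrix (Fin m) (Fin n) ℝ, B.rank ≤ k →
      frobNorm (A - A * V * Vᵀ) ≤ frobNorm (A - B))
    (𝒳 : Finset (Matrix (Fin m) (Fin k) ℝ)) (hne : 𝒳.Nonempty)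
    (horth : ∀ X ∈ 𝒳, Xᵀ * X = 1)
    (Xhat : Matrix (Fin m) (Fin k) ℝ) (hXhat : Xhat ∈ 𝒳)
    (hXhatMin : ∀ X ∈ 𝒳,
      frobNorm (A * V - Xhat * Xhatᵀ * (A * V)) ≤ frobNorm (A * V - X * Xᵀ * (A * V)))
    (Xopt : Matrix (Fin m) (Fin k) ℝ) (hXopt : Xopt ∈ 𝒳)
    (hXoptMin : ∀ X ∈ 𝒳,
      frobNorm (A - Xopt * Xoptᵀ * A) ≤ frobNorm (A - X * Xᵀ * A)) :
    frobSq (A - Xhat * Xhatᵀ * A) ≤ 2 * frobSq (A - Xopt * Xoptᵀ * A) := by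
  set P : Matrix (Fin n) (Fin n) ℝ := V * Vᵀ with hP
  have hPs : Pᵀ = P := by rw [hP, transpose_mul, transpose_transpose]
  have hPi : P * P = P := by
    rw [hP, Matrix.mul_assoc, ← Matrix.mul_assoc Vᵀ, hV, Matrix.one_mul]
  set Qh : Matrix (Fin m) (Fin m) ℝ := Xhat * Xhatᵀ with hQh
  set Qo : Matrix (Fin m) (Fin m) ℝ := Xopt * Xoptᵀ with hQo
  have hQhs : Qhᵀ = Qh := by rw [hQh, transpose_mul, transpose_transpose]
  have hQhi : Qh * Qh = Qh := by
    rw [hQh, Matrix.mul_assoc, ← Matrix.mul_assoc Xhatᵀ, horth Xhat hXhat, Matrix.one_mul]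
  have hQos : Qoᵀ = Qo := by rw [hQo, transpose_mul, transpose_transpose]
  have hQoi : Qo * Qo = Qo := by
    rw [hQo, Matrix.mul_assoc, ← Matrix.mul_assoc Xoptᵀ, horth Xopt hXopt, Matrix.one_mul]
  have hsub : ∀ {a : ℕ} (Q : Matrix (Fin m) (Fin m) ℝ) (M : Matrix (Fin m) (Fin a) ℝ),
      (1 - Q) * M = M - Q * M := by
    intro a Q M; rw [Matrix.sub_mul, Matrix.one_mul]
  -- rewrite goal in terms of (1 - Q) * A
  have goalL : A - Xhat * Xhatᵀ * A = (1 - Qh) * A := by rw [hsub]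
  have goalR : A - Xopt * Xoptᵀ * A = (1 - Qo) * A := by rw [hsub]
  rw [goalL, goalR]
  -- decomposition of the left side
  have hdec := proj_right ((1 - Qh) * A) P hPs hPi
  -- Term 1 bound
  have hAP : ∀ Q : Matrix (Fin m) (Fin m) ℝ,
      (1 - Q) * A * P = ((1 - Q) * (A * V)) * Vᵀ := by
    intro Q; rw [hP, ← Matrix.mul_assoc, ← Matrix.mul_assoc]
  have t1 : frobSq ((1 - Qh) * A * P) ≤ frobSq ((1 - Qo) * A) := by
    calc frobSq ((1 - Qh) * A * P)
        = frobSq ((1 - Qh) * (A * V)) := by rw [hAP, frobSq_mul_Vt _ V hV]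
      _ ≤ frobSq ((1 - Qo) * (A * V)) := by
          have h := frobNorm_le_imp (hXhatMin Xopt hXopt)
          rwa [← hsub Qh, ← hsub Qo] at h
      _ = frobSq ((1 - Qo) * A * P) := by rw [hAP, frobSq_mul_Vt _ V hV]
      _ ≤ frobSq ((1 - Qo) * A) := by
          rw [proj_right ((1 - Qo) * A) P hPs hPi]
          have := frobSq_nonneg ((1 - Qo) * A * (1 - P))
          linarith
  -- Term 2 bound
  have t2 : frobSq ((1 - Qh) * A * (1 - P)) ≤ frobSq ((1 - Qo) * A) := by
    have step1 : frobSq ((1 - Qh) * (A * (1 - P))) ≤ frobSq (A * (1 - P)) := by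
      rw [proj_left (A * (1 - P)) Qh hQhs hQhi]
      have := frobSq_nonneg (Qh * (A * (1 - P)))
      linarith
    have hrank : (Xopt * Xoptᵀ * A).rank ≤ k := by
      calc (Xopt * Xoptᵀ * A).rank = (Xopt * (Xoptᵀ * A)).rank := by
            rw [Matrix.mul_assoc]
        _ ≤ Xopt.rank := Matrix.rank_mul_le_left _ _
        _ ≤ k := Matrix.rank_le_width Xopt
    have step2 : frobSq (A * (1 - P)) ≤ frobSq ((1 - Qo) * A) := by
      have h := frobNorm_le_imp (hbest (Xopt * Xoptᵀ * A) hrank)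
      rwa [show A - A * V * Vᵀ = A * (1 - P) by
        rw [Matrix.mul_sub, Matrix.mul_one, hP, ← Matrix.mul_assoc], goalR] at h
    calc frobSq ((1 - Qh) * A * (1 - P))
        = frobSq ((1 - Qh) * (A * (1 - P))) := by rw [Matrix.mul_assoc]
      _ ≤ frobSq (A * (1 - P)) := step1
      _ ≤ frobSq ((1 - Qo) * A) := step2
  rw [hdec]; linarith
end

section
/- Let Z ∈ ℝ^{n×k} satisfy ZᵀZ = I_k, let A ∈ ℝ^{m×n}, set E = A − A Z Zᵀ (so E Z = 0), and let P ∈ ℝ^{m×m} be any matrix. Then ‖A − P A‖_F² = ‖(I_m − P) A Z Zᵀ‖_F² + ‖(I_m − P) E‖_F². -/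
open Matrix

lemma frobSq_add {m n : ℕ} (X Y : Matrix (Fin m) (Fin n) ℝ)
    (h : (Xᵀ * Y).trace = 0) :
    frobSq (X + Y) = frobSq X + frobSq Y := by
  have hYX : (Yᵀ * X).trace = 0 := by
    rw [← Matrix.trace_transpose, Matrix.transpose_mul, Matrix.transpose_transpose, h]
  simp only [frobSq_eq_trace, Matrix.transpose_add, Matrix.add_mul, Matrix.mul_add,
    Matrix.trace_add, h, hYX]
  ring

/-- Pythagorean split of the k-means residual: with E = A − A Z Zᵀ (so E Z = 0),
for any m×m matrix P,
‖A − P A‖_F² = ‖(I − P) A Z Zᵀ‖_F² + ‖(I − P) E‖_F². -/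
theorem residual_pythagorean_split {m n k : ℕ}
    (Z : Matrix (Fin n) (Fin k) ℝ) (hZ : Zᵀ * Z = 1)
    (A : Matrix (Fin m) (Fin n) ℝ)
    (P : Matrix (Fin m) (Fin m) ℝ) :
    frobSq (A - P * A) =
      frobSq ((1 - P) * (A * Z * Zᵀ)) + frobSq ((1 - P) * (A - A * Z * Zᵀ)) := by
  set Q : Matrix (Fin m) (Fin m) ℝ := 1 - P with hQ
  have hEZ : (A - A * Z * Zᵀ) * Z = 0 := by
    rw [Matrix.sub_mul, Matrix.mul_assoc (A * Z), hZ, Matrix.mul_one, sub_self]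
  have hsplit : A - P * A = Q * (A * Z * Zᵀ) + Q * (A - A * Z * Zᵀ) := by
    rw [← Matrix.mul_add, add_sub_cancel, hQ, Matrix.sub_mul, Matrix.one_mul]
  rw [hsplit]
  apply frobSq_add
  have : (Q * (A * Z * Zᵀ))ᵀ * (Q * (A - A * Z * Zᵀ)) =
      Z * (Zᵀ * Aᵀ * Qᵀ * (Q * (A - A * Z * Zᵀ))) := by
    simp only [Matrix.transpose_mul, Matrix.transpose_transpose, Matrix.mul_assoc]
  rw [this, Matrix.trace_mul_comm]
  have : Zᵀ * Aᵀ * Qᵀ * (Q * (A - A * Z * Zᵀ)) * Z =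
      Zᵀ * Aᵀ * Qᵀ * Q * ((A - A * Z * Zᵀ) * Z) := by
    simp only [Matrix.mul_assoc]
  rw [this, hEZ, Matrix.mul_zero, Matrix.trace_zero]
end

section
/- (Deterministic core of Theorem on feature extraction via approximate SVD.) Let A ∈ ℝ^{m×n}, let Z ∈ ℝ^{n×k} with ZᵀZ = I_k, and set E = A − A Z Zᵀ. Let 𝒳 be a nonempty finite set of matrices X ∈ ℝ^{m×k} each with XᵀX = I_k, let X_opt ∈ 𝒳 minimize ‖A − X Xᵀ A‖_F over 𝒳, and write F_opt = ‖A − X_opt X_optᵀ A‖_F². Let ε > 0 and γ ≥ 1, and assume: (i) ‖E‖_F² ≤ (1 + ε) F_opt; and (ii) X̂ ∈ 𝒳 satisfies ‖A Z − X̂ X̂ᵀ A Z‖_F² ≤ γ · min_{X ∈ 𝒳} ‖A Z − X Xᵀ A Z‖_F². Then ‖A − X̂ X̂ᵀ A‖_F² ≤ (1 + (1 + ε) γ) F_opt. -/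
open Matrix

lemma frobSq_add_of_orth {m n : ℕ} (M1 M2 : Matrix (Fin m) (Fin n) ℝ)
    (h : (M1ᵀ * M2).trace = 0) :
    frobSq (M1 + M2) = frobSq M1 + frobSq M2 := by
  have h2 : (M2ᵀ * M1).trace = 0 := by
    rw [← Matrix.trace_transpose, transpose_mul, transpose_transpose, h]
  simp only [frobSq_eq_trace, transpose_add, Matrix.add_mul, Matrix.mul_add, trace_add, h, h2]
  ring

lemma frob_mul_transpose {m n k : ℕ} (M : Matrix (Fin m) (Fin k) ℝ)
    (Z : Matrix (Fin n) (Fin k) ℝ) (hZ : Zᵀ * Z = 1) :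
    frobSq (M * Zᵀ) = frobSq M := by
  have e1 : (M * Zᵀ)ᵀ * (M * Zᵀ) = Z * (Mᵀ * M) * Zᵀ := by
    simp [transpose_mul, Matrix.mul_assoc]
  rw [frobSq_eq_trace, frobSq_eq_trace, e1, Matrix.trace_mul_cycle, ← Matrix.mul_assoc,
    hZ, Matrix.one_mul]

lemma trace_orth_of_mul_zero {m n k : ℕ} (E : Matrix (Fin m) (Fin n) ℝ)
    (B : Matrix (Fin m) (Fin k) ℝ) (Z : Matrix (Fin n) (Fin k) ℝ)
    (hEZ : E * Z = 0) : (Eᵀ * (B * Zᵀ)).trace = 0 := by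
  rw [Matrix.trace_mul_comm, Matrix.mul_assoc, ← transpose_mul, hEZ]
  simp

lemma frob_proj_sub_le {m n k : ℕ} (X : Matrix (Fin m) (Fin k) ℝ)
    (hX : Xᵀ * X = 1) (M : Matrix (Fin m) (Fin n) ℝ) :
    frobSq (M - X * Xᵀ * M) ≤ frobSq M := by
  have key : Xᵀ * (X * (Xᵀ * M)) = Xᵀ * M := by
    rw [← Matrix.mul_assoc, hX, Matrix.one_mul]
  have h0 : ((X * Xᵀ * M)ᵀ * (M - X * Xᵀ * M)).trace = 0 := by
    have : (X * Xᵀ * M)ᵀ * (M - X * Xᵀ * M) = 0 := by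
      simp [transpose_mul, Matrix.mul_sub, Matrix.mul_assoc, key]
    rw [this, trace_zero]
  have hdec : M = (X * Xᵀ * M) + (M - X * Xᵀ * M) := by abel
  have := frobSq_add_of_orth (X * Xᵀ * M) (M - X * Xᵀ * M) h0
  rw [← hdec] at this
  have := frobSq_nonneg (X * Xᵀ * M)
  linarith

lemma frob_mul_right_le {m n k : ℕ} (M : Matrix (Fin m) (Fin n) ℝ)
    (Z : Matrix (Fin n) (Fin k) ℝ) (hZ : Zᵀ * Z = 1) :
    frobSq (M * Z) ≤ frobSq M := by
  rw [← frob_mul_transpose (M * Z) Z hZ]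
  have hMZ : (M - M * Z * Zᵀ) * Z = 0 := by
    rw [Matrix.sub_mul, Matrix.mul_assoc (M * Z) Zᵀ Z, hZ, Matrix.mul_one, sub_self]
  have h0 := trace_orth_of_mul_zero (M - M * Z * Zᵀ) (M * Z) Z hMZ
  have hdec : M = (M - M * Z * Zᵀ) + (M * Z * Zᵀ) := by abel
  have hp := frobSq_add_of_orth (M - M * Z * Zᵀ) (M * Z * Zᵀ) h0
  rw [← hdec] at hp
  have := frobSq_nonneg (M - M * Z * Zᵀ)
  linarith

/-- Deterministic core of the approximate-SVD feature extraction theorem: if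
E = A − A Z Zᵀ satisfies ‖E‖_F² ≤ (1+ε) F_opt and X̂ is a γ-approximate k-means
solution on the projected data A Z, then ‖A − X̂ X̂ᵀ A‖_F² ≤ (1 + (1+ε)γ) F_opt. -/
theorem approx_svd_feature_extraction {m n k : ℕ}
    (A : Matrix (Fin m) (Fin n) ℝ)
    (Z : Matrix (Fin n) (Fin k) ℝ) (hZ : Zᵀ * Z = 1)
    (𝒳 : Finset (Matrix (Fin m) (Fin k) ℝ)) (hne : 𝒳.Nonempty)
    (horth : ∀ X ∈ 𝒳, Xᵀ * X = 1)
    (Xopt : Matrix (Fin m) (Fin k) ℝ) (hXopt : Xopt ∈ 𝒳)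
    (hXoptMin : ∀ X ∈ 𝒳,
      frobSq (A - Xopt * Xoptᵀ * A) ≤ frobSq (A - X * Xᵀ * A))
    (ε γ : ℝ) (hε : 0 < ε) (hγ : 1 ≤ γ)
    (hE : frobSq (A - A * Z * Zᵀ) ≤ (1 + ε) * frobSq (A - Xopt * Xoptᵀ * A))
    (Xhat : Matrix (Fin m) (Fin k) ℝ) (hXhat : Xhat ∈ 𝒳)
    (happrox : frobSq (A * Z - Xhat * Xhatᵀ * (A * Z)) ≤
      γ * 𝒳.inf' hne (fun X => frobSq (A * Z - X * Xᵀ * (A * Z)))) :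
    frobSq (A - Xhat * Xhatᵀ * A) ≤
      (1 + (1 + ε) * γ) * frobSq (A - Xopt * Xoptᵀ * A) := by
  set E : Matrix (Fin m) (Fin n) ℝ := A - A * Z * Zᵀ with hEdef
  set Fopt : ℝ := frobSq (A - Xopt * Xoptᵀ * A) with hFopt
  have hXh : Xhatᵀ * Xhat = 1 := horth Xhat hXhat
  -- M1 := E - P E, M2 := W Zᵀ with W := A Z - P (A Z)
  set M1 : Matrix (Fin m) (Fin n) ℝ := E - Xhat * Xhatᵀ * E with hM1
  set W : Matrix (Fin m) (Fin k) ℝ := A * Z - Xhat * Xhatᵀ * (A * Z) with hW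
  have hM1Z : M1 * Z = 0 := by
    have hEZ : E * Z = 0 := by
      rw [hEdef, Matrix.sub_mul, Matrix.mul_assoc (A * Z) Zᵀ Z, hZ, Matrix.mul_one, sub_self]
    rw [hM1, Matrix.sub_mul, hEZ, Matrix.mul_assoc, hEZ, Matrix.mul_zero, sub_self]
  have hcross : (M1ᵀ * (W * Zᵀ)).trace = 0 :=
    trace_orth_of_mul_zero M1 W Z hM1Z
  have hdec : A - Xhat * Xhatᵀ * A = M1 + W * Zᵀ := by
    rw [hM1, hW, hEdef]
    simp only [Matrix.mul_sub, Matrix.sub_mul, Matrix.mul_assoc]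
    abel
  have hpy : frobSq (A - Xhat * Xhatᵀ * A) = frobSq M1 + frobSq (W * Zᵀ) := by
    rw [hdec]; exact frobSq_add_of_orth M1 (W * Zᵀ) hcross
  have h1 : frobSq M1 ≤ frobSq E := frob_proj_sub_le Xhat hXh E
  have h2 : frobSq (W * Zᵀ) = frobSq W := frob_mul_transpose W Z hZ
  -- bound the infimum
  have hinf : 𝒳.inf' hne (fun X => frobSq (A * Z - X * Xᵀ * (A * Z))) ≤ Fopt := by
    refine le_trans (Finset.inf'_le _ hXopt) ?_
    have e1 : A * Z - Xopt * Xoptᵀ * (A * Z) = (A - Xopt * Xoptᵀ * A) * Z := by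
      simp [Matrix.sub_mul, Matrix.mul_assoc]
    rw [e1]
    exact frob_mul_right_le _ Z hZ
  have hγ0 : (0:ℝ) ≤ γ := by linarith
  have h3 : frobSq W ≤ γ * Fopt :=
    le_trans happrox (mul_le_mul_of_nonneg_left hinf hγ0)
  have hF0 : 0 ≤ Fopt := frobSq_nonneg _
  nlinarith [hE, h1, h2, h3, hpy, hF0, hε.le, hγ,
    mul_nonneg (mul_nonneg hε.le (by linarith : (0:ℝ) ≤ γ - 1)) hF0]
end

section
/- (Deterministic core of Theorem on feature extraction via random projections.) Let A ∈ ℝ^{m×n}, let V ∈ ℝ^{n×k} with VᵀV = I_k, set A_k = A V Vᵀ, and assume ‖A − A_k‖_F ≤ ‖A − B‖_F for every B of rank at most k. Let 𝒳 be a nonempty finite set of matrices X ∈ ℝ^{m×k} each with XᵀX = I_k, let X_opt ∈ 𝒳 minimize ‖A − X Xᵀ A‖_F over 𝒳, and write F_opt = ‖A − X_opt X_optᵀ A‖_F². Let 0 < ε < 1/3, γ ≥ 1, and let R ∈ ℝ^{n×r} with r > k satisfy: (i) 1 − ε ≤ σ_i²(Vᵀ R) for all i ∈ {1,…,k}; (ii)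 ‖A_k − A R (Vᵀ R)⁺ Vᵀ‖_F ≤ 3 ε ‖A − A_k‖_F; (iii) ‖(I_m − X_opt X_optᵀ) A R‖_F² ≤ (1 + ε) ‖(I_m − X_opt X_optᵀ) A‖_F². If X̂ ∈ 𝒳 satisfies ‖A R − X̂ X̂ᵀ A R‖_F² ≤ γ · min_{X ∈ 𝒳} ‖A R − X Xᵀ A R‖_F², then ‖A − X̂ X̂ᵀ A‖_F² ≤ (1 + (1 + 15 ε) γ) F_opt. -/
open Matrix

namespace RPAux

lemma trace_inner_eq {a b : ℕ} (M N : Matrix (Fin a) (Fin b) ℝ) :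
    Matrix.trace (Mᵀ * N) = ∑ i, ∑ j, M i j * N i j := by
  simp only [Matrix.trace, Matrix.diag, Matrix.mul_apply, Matrix.transpose_apply]
  rw [Finset.sum_comm]

lemma frobSq_eq_trace {a b : ℕ} (M : Matrix (Fin a) (Fin b) ℝ) :
    frobSq M = Matrix.trace (Mᵀ * M) := by
  rw [trace_inner_eq]; simp [frobSq, sq]

lemma frobSq_nonneg {a b : ℕ} (M : Matrix (Fin a) (Fin b) ℝ) : 0 ≤ frobSq M := by
  apply Finset.sum_nonneg; intro i _; apply Finset.sum_nonneg; intro j _; positivity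

lemma frobNorm_nonneg {a b : ℕ} (M : Matrix (Fin a) (Fin b) ℝ) : 0 ≤ frobNorm M :=
  Real.sqrt_nonneg _

lemma frobNorm_sq {a b : ℕ} (M : Matrix (Fin a) (Fin b) ℝ) :
    frobNorm M ^ 2 = frobSq M := Real.sq_sqrt (frobSq_nonneg M)

lemma frobSq_transpose {a b : ℕ} (M : Matrix (Fin a) (Fin b) ℝ) :
    frobSq Mᵀ = frobSq M := by
  simp only [frobSq, Matrix.transpose_apply]
  rw [Finset.sum_comm]

lemma frobSq_add {a b : ℕ} (M N : Matrix (Fin a) (Fin b) ℝ) :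
    frobSq (M + N) = frobSq M + 2 * Matrix.trace (Mᵀ * N) + frobSq N := by
  rw [trace_inner_eq]
  simp only [frobSq, Matrix.add_apply, add_sq, Finset.sum_add_distrib, Finset.mul_sum]
  ring_nf

lemma pythagoras {a b : ℕ} (M N : Matrix (Fin a) (Fin b) ℝ)
    (h : Matrix.trace (Mᵀ * N) = 0) :
    frobSq (M + N) = frobSq M + frobSq N := by
  rw [frobSq_add, h]; ring

/-- Cauchy–Schwarz for the Frobenius inner product. -/
lemma trace_inner_le {a b : ℕ} (M N : Matrix (Fin a) (Fin b) ℝ) :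
    Matrix.trace (Mᵀ * N) ≤ frobNorm M * frobNorm N := by
  rw [trace_inner_eq]
  have h1 : (∑ i, ∑ j, M i j * N i j) = ∑ p : Fin a × Fin b, M p.1 p.2 * N p.1 p.2 := by
    rw [Fintype.sum_prod_type]
  have h2 := Finset.sum_mul_sq_le_sq_mul_sq Finset.univ
    (fun p : Fin a × Fin b => M p.1 p.2) (fun p : Fin a × Fin b => N p.1 p.2)
  have h3 : (∑ p : Fin a × Fin b, M p.1 p.2 ^ 2) = frobSq M := by
    rw [frobSq, Fintype.sum_prod_type]
  have h4 : (∑ p : Fin a × Fin b, N p.1 p.2 ^ 2) = frobSq N := by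
    rw [frobSq, Fintype.sum_prod_type]
  rw [h3, h4] at h2
  rw [h1]
  calc (∑ p : Fin a × Fin b, M p.1 p.2 * N p.1 p.2)
      ≤ |∑ p : Fin a × Fin b, M p.1 p.2 * N p.1 p.2| := le_abs_self _
    _ = Real.sqrt ((∑ p : Fin a × Fin b, M p.1 p.2 * N p.1 p.2) ^ 2) :=
        (Real.sqrt_sq_eq_abs _).symm
    _ ≤ Real.sqrt (frobSq M * frobSq N) := Real.sqrt_le_sqrt h2
    _ = frobNorm M * frobNorm N := Real.sqrt_mul (frobSq_nonneg M) _

lemma frobNorm_add_le {a b : ℕ} (M N : Matrix (Fin a) (Fin b) ℝ) :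
    frobNorm (M + N) ≤ frobNorm M + frobNorm N := by
  have h : frobSq (M + N) ≤ (frobNorm M + frobNorm N) ^ 2 := by
    rw [frobSq_add]
    have := trace_inner_le M N
    have h1 := frobNorm_sq M
    have h2 := frobNorm_sq N
    nlinarith
  calc frobNorm (M + N) = Real.sqrt (frobSq (M + N)) := rfl
    _ ≤ Real.sqrt ((frobNorm M + frobNorm N) ^ 2) := Real.sqrt_le_sqrt h
    _ = frobNorm M + frobNorm N := by
        rw [Real.sqrt_sq (add_nonneg (frobNorm_nonneg M) (frobNorm_nonneg N))]

/-- Left multiplication by a symmetric idempotent: both pieces are smaller. -/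
lemma frobSq_split {a b : ℕ} (K : Matrix (Fin a) (Fin a) ℝ) (hKs : Kᵀ = K)
    (hKi : K * K = K) (M : Matrix (Fin a) (Fin b) ℝ) :
    frobSq M = frobSq (K * M) + frobSq ((1 - K) * M) := by
  have hsplit : M = K * M + (1 - K) * M := by
    rw [Matrix.sub_mul, Matrix.one_mul]; abel
  have hz : Kᵀ * ((1 - K) * M) = 0 := by
    rw [← Matrix.mul_assoc, hKs, Matrix.mul_sub, Matrix.mul_one, hKi, sub_self,
      Matrix.zero_mul]
  have hinner : Matrix.trace ((K * M)ᵀ * ((1 - K) * M)) = 0 := by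
    rw [Matrix.transpose_mul, Matrix.mul_assoc, hz, Matrix.mul_zero, Matrix.trace_zero]
  conv_lhs => rw [hsplit]
  exact pythagoras _ _ hinner

lemma frobSq_proj_le {a b : ℕ} (K : Matrix (Fin a) (Fin a) ℝ) (hKs : Kᵀ = K)
    (hKi : K * K = K) (M : Matrix (Fin a) (Fin b) ℝ) :
    frobSq ((1 - K) * M) ≤ frobSq M := by
  have := frobSq_split K hKs hKi M
  have := frobSq_nonneg (K * M)
  linarith

lemma frobSq_proj_le' {a b : ℕ} (K : Matrix (Fin a) (Fin a) ℝ) (hKs : Kᵀ = K)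
    (hKi : K * K = K) (M : Matrix (Fin a) (Fin b) ℝ) :
    frobSq (K * M) ≤ frobSq M := by
  have := frobSq_split K hKs hKi M
  have := frobSq_nonneg ((1 - K) * M)
  linarith

lemma frobSq_mul_proj_le {a b : ℕ} (K : Matrix (Fin b) (Fin b) ℝ) (hKs : Kᵀ = K)
    (hKi : K * K = K) (M : Matrix (Fin a) (Fin b) ℝ) :
    frobSq (M * K) ≤ frobSq M := by
  have h : frobSq (M * K) = frobSq (K * Mᵀ) := by
    rw [← frobSq_transpose (M * K), Matrix.transpose_mul, hKs]
  rw [h, ← frobSq_transpose M]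
  exact frobSq_proj_le' K hKs hKi Mᵀ

/-- Right multiplication by a matrix with orthonormal rows preserves `frobSq`. -/
lemma frobSq_mul_orth {a b c : ℕ} (M : Matrix (Fin a) (Fin b) ℝ)
    (V : Matrix (Fin c) (Fin b) ℝ) (hV : Vᵀ * V = 1) :
    frobSq (M * Vᵀ) = frobSq M := by
  rw [frobSq_eq_trace, frobSq_eq_trace, Matrix.transpose_mul, Matrix.transpose_transpose]
  have h1 : V * Mᵀ * (M * Vᵀ) = V * (Mᵀ * M * Vᵀ) := by
    simp only [Matrix.mul_assoc]
  rw [h1, Matrix.trace_mul_comm, Matrix.mul_assoc, hV, Matrix.mul_one]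

lemma psd_sub_smul {k : ℕ} {H : Matrix (Fin k) (Fin k) ℝ} (hH : H.IsHermitian) {c : ℝ}
    (hc : ∀ i, c ≤ hH.eigenvalues i) : (H - c • 1).PosSemidef := by
  set U : Matrix (Fin k) (Fin k) ℝ := (hH.eigenvectorUnitary : Matrix (Fin k) (Fin k) ℝ)
    with hUdef
  have hU : U * star U = 1 := Matrix.mem_unitaryGroup_iff.mp hH.eigenvectorUnitary.2
  have hd : (diagonal (RCLike.ofReal ∘ hH.eigenvalues) : Matrix (Fin k) (Fin k) ℝ) - c • 1
      = diagonal (fun i => hH.eigenvalues i - c) := by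
    ext i j
    by_cases h : i = j <;>
      simp [h, Matrix.diagonal_apply, Matrix.one_apply, Function.comp]
  have h1 : H - c • 1 = U * diagonal (fun i => hH.eigenvalues i - c) * star U := by
    conv_lhs => rw [hH.spectral_theorem]
    rw [← hd, Matrix.mul_sub, Matrix.sub_mul]
    congr 1
    symm
    rw [Matrix.mul_smul, Matrix.smul_mul, Matrix.mul_one, hU]
  rw [h1, Matrix.star_eq_conjTranspose]
  exact (Matrix.posSemidef_diagonal_iff.mpr fun i =>
    sub_nonneg.mpr (hc i)).mul_mul_conjTranspose_same U

lemma trace_mul_psd_nonneg {a k : ℕ} (N : Matrix (Fin a) (Fin k) ℝ)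
    (D : Matrix (Fin k) (Fin k) ℝ) (hD : D.PosSemidef) :
    0 ≤ Matrix.trace (Nᵀ * N * D) := by
  obtain ⟨B, hB⟩ : ∃ B : Matrix (Fin k) (Fin k) ℝ, D = Bᴴ * B := by
    open scoped MatrixOrder Matrix.Norms.L2Operator in
    exact CStarAlgebra.nonneg_iff_eq_star_mul_self.mp hD.nonneg
  have hBT : (Bᴴ : Matrix (Fin k) (Fin k) ℝ) = Bᵀ :=
    Matrix.conjTranspose_eq_transpose_of_trivial B
  rw [hB, hBT]
  have h1 : Nᵀ * N * (Bᵀ * B) = (Nᵀ * (N * Bᵀ)) * B := by simp [Matrix.mul_assoc]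
  rw [h1, Matrix.trace_mul_comm]
  have h2 : B * (Nᵀ * (N * Bᵀ)) = (N * Bᵀ)ᵀ * (N * Bᵀ) := by
    rw [Matrix.transpose_mul, Matrix.transpose_transpose]
    simp [Matrix.mul_assoc]
  rw [h2, ← frobSq_eq_trace]
  exact frobSq_nonneg _

lemma frobSq_mul_sv_lower {a k r : ℕ} (S : Matrix (Fin k) (Fin r) ℝ) (c : ℝ)
    (hc : ∀ i, c ≤ (Matrix.isHermitian_mul_conjTranspose_self S).eigenvalues i)
    (N : Matrix (Fin a) (Fin k) ℝ) :
    c * frobSq N ≤ frobSq (N * S) := by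
  have hH := Matrix.isHermitian_mul_conjTranspose_self S
  have hpsd := psd_sub_smul hH hc
  have key := trace_mul_psd_nonneg N _ hpsd
  have hct : (Sᴴ : Matrix (Fin r) (Fin k) ℝ) = Sᵀ :=
    Matrix.conjTranspose_eq_transpose_of_trivial S
  have e1 : frobSq (N * S) = Matrix.trace (Nᵀ * N * (S * Sᵀ)) := by
    rw [frobSq_eq_trace, Matrix.transpose_mul]
    have h : Sᵀ * Nᵀ * (N * S) = Sᵀ * (Nᵀ * N * S) := by simp [Matrix.mul_assoc]
    rw [h, Matrix.trace_mul_comm]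
    simp [Matrix.mul_assoc]
  have e2 : Matrix.trace (Nᵀ * N * (c • (1 : Matrix (Fin k) (Fin k) ℝ)))
      = c * frobSq N := by
    rw [Matrix.mul_smul, Matrix.mul_one, Matrix.trace_smul, ← frobSq_eq_trace]
    simp
  rw [Matrix.mul_sub, Matrix.trace_sub, hct, e2] at key
  rw [e1]
  linarith

lemma numeric_endgame {ε γ F e u b t s : ℝ} (hε0 : 0 < ε) (hε1 : ε < 1/3) (hγ : 1 ≤ γ)
    (hF0 : 0 ≤ F) (he0 : 0 ≤ e) (hu0 : 0 ≤ u) (hb0 : 0 ≤ b)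
    (f1 : e^2 ≤ F) (f3 : s ≤ e^2) (hTri : b ≤ u + 3*ε*e)
    (f5 : (1-ε) * u^2 ≤ t) (f6 : t ≤ γ * ((1+ε)*F)) :
    b^2 + s ≤ (1 + (1+15*ε)*γ) * F := by
  have hγF0 : 0 ≤ γ * F := mul_nonneg (by linarith) hF0
  have hu2 : u ^ 2 ≤ (1 + 3 * ε) * (γ * F) := by
    have hkey : γ * ((1 + ε) * F) ≤ (1 - ε) * ((1 + 3 * ε) * (γ * F)) := by
      nlinarith [mul_nonneg hγF0 (mul_nonneg hε0.le (by linarith : (0:ℝ) ≤ 1 - 3 * ε))]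
    have h1 : (1 - ε) * u ^ 2 ≤ (1 - ε) * ((1 + 3 * ε) * (γ * F)) := by linarith
    exact le_of_mul_le_mul_left h1 (by linarith : (0:ℝ) < 1 - ε)
  have heu : e * u ≤ (3 / 2) * (γ * F) := by
    have hsq : (e * u) ^ 2 ≤ ((3 / 2) * (γ * F)) ^ 2 := by
      have h1 : e ^ 2 * u ^ 2 ≤ F * ((1 + 3 * ε) * (γ * F)) :=
        mul_le_mul f1 hu2 (sq_nonneg u) hF0
      nlinarith [mul_nonneg (mul_nonneg (by linarith : (0:ℝ) ≤ γ) (sq_nonneg F))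
        (by nlinarith : (0:ℝ) ≤ 9 / 4 * γ - 1 - 3 * ε)]
    have h2 : 0 ≤ (3 / 2) * (γ * F) := by positivity
    exact (pow_le_pow_iff_left₀ (mul_nonneg he0 hu0) h2 two_ne_zero).mp hsq
  have h62 : 9 * ε ^ 2 * e ^ 2 ≤ 3 * ε * (γ * F) := by
    nlinarith [f1, mul_nonneg hε0.le hF0, mul_nonneg (mul_nonneg hε0.le hε0.le) hF0]
  have hb2 : b ^ 2 ≤ (u + 3 * ε * e) ^ 2 := pow_le_pow_left₀ hb0 hTri 2
  have hexp : (u + 3 * ε * e) ^ 2 = u ^ 2 + 6 * ε * (e * u) + 9 * ε ^ 2 * e ^ 2 := by ring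
  have h61 : 6 * ε * (e * u) ≤ 9 * (ε * (γ * F)) := by
    have := mul_le_mul_of_nonneg_left heu (by positivity : (0:ℝ) ≤ 6 * ε)
    linarith
  nlinarith [f3, f1, hb2, hexp, h61, h62, hu2, mul_nonneg hε0.le hγF0]

end RPAux

/-- Deterministic core of the random-projection feature extraction theorem: under the
stated conditions on R, a γ-approximate k-means solution X̂ computed on the projected
data A R satisfies ‖A − X̂ X̂ᵀ A‖_F² ≤ (1 + (1 + 15 ε) γ) F_opt. -/
theorem random_projection_feature_extraction {m n k r : ℕ} (hkr : k < r)
    (A : Matrix (Fin m) (Fin n) ℝ)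
    (V : Matrix (Fin n) (Fin k) ℝ) (hV : Vᵀ * V = 1)
    (hbest : ∀ B : Matrix (Fin m) (Fin n) ℝ, B.rank ≤ k →
      frobNorm (A - A * V * Vᵀ) ≤ frobNorm (A - B))
    (𝒳 : Finset (Matrix (Fin m) (Fin k) ℝ)) (hne : 𝒳.Nonempty)
    (horth : ∀ X ∈ 𝒳, Xᵀ * X = 1)
    (Xopt : Matrix (Fin m) (Fin k) ℝ) (hXopt : Xopt ∈ 𝒳)
    (hXoptMin : ∀ X ∈ 𝒳,
      frobSq (A - Xopt * Xoptᵀ * A) ≤ frobSq (A - X * Xᵀ * A))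
    (ε γ : ℝ) (hε0 : 0 < ε) (hε1 : ε < 1 / 3) (hγ : 1 ≤ γ)
    (R : Matrix (Fin n) (Fin r) ℝ)
    (hσ : ∀ i, 1 - ε ≤ singValSq (Vᵀ * R) i)
    (P : Matrix (Fin r) (Fin k) ℝ)
    (hp1 : (Vᵀ * R) * P * (Vᵀ * R) = Vᵀ * R)
    (hp2 : P * (Vᵀ * R) * P = P)
    (hp3 : ((Vᵀ * R) * P)ᵀ = (Vᵀ * R) * P)
    (hp4 : (P * (Vᵀ * R))ᵀ = P * (Vᵀ * R))
    (hEtilde : frobNorm (A * V * Vᵀ - A * R * P * Vᵀ)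
      ≤ 3 * ε * frobNorm (A - A * V * Vᵀ))
    (hAR : frobSq ((1 - Xopt * Xoptᵀ) * (A * R))
      ≤ (1 + ε) * frobSq ((1 - Xopt * Xoptᵀ) * A))
    (Xhat : Matrix (Fin m) (Fin k) ℝ) (hXhat : Xhat ∈ 𝒳)
    (happrox : frobSq (A * R - Xhat * Xhatᵀ * (A * R)) ≤
      γ * 𝒳.inf' hne (fun X => frobSq (A * R - X * Xᵀ * (A * R)))) :
    frobSq (A - Xhat * Xhatᵀ * A) ≤
      (1 + (1 + 15 * ε) * γ) * frobSq (A - Xopt * Xoptᵀ * A) := by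
  classical
  set Q : Matrix (Fin m) (Fin m) ℝ := Xhat * Xhatᵀ with hQdef
  set Qo : Matrix (Fin m) (Fin m) ℝ := Xopt * Xoptᵀ with hQodef
  set S : Matrix (Fin k) (Fin r) ℝ := Vᵀ * R with hSdef
  set W : Matrix (Fin n) (Fin n) ℝ := V * Vᵀ with hWdef
  -- basic projection facts
  have hQs : Qᵀ = Q := by rw [hQdef, Matrix.transpose_mul, Matrix.transpose_transpose]
  have hQi : Q * Q = Q := by
    rw [hQdef]
    calc Xhat * Xhatᵀ * (Xhat * Xhatᵀ) = Xhat * (Xhatᵀ * Xhat) * Xhatᵀ := by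
          simp only [Matrix.mul_assoc]
      _ = Xhat * Xhatᵀ := by rw [horth Xhat hXhat, Matrix.mul_one]
  have hQos : Qoᵀ = Qo := by rw [hQodef, Matrix.transpose_mul, Matrix.transpose_transpose]
  have hQoi : Qo * Qo = Qo := by
    rw [hQodef]
    calc Xopt * Xoptᵀ * (Xopt * Xoptᵀ) = Xopt * (Xoptᵀ * Xopt) * Xoptᵀ := by
          simp only [Matrix.mul_assoc]
      _ = Xopt * Xoptᵀ := by rw [horth Xopt hXopt, Matrix.mul_one]
  have hWs : Wᵀ = W := by rw [hWdef, Matrix.transpose_mul, Matrix.transpose_transpose]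
  have hWi : W * W = W := by
    rw [hWdef]
    calc V * Vᵀ * (V * Vᵀ) = V * (Vᵀ * V) * Vᵀ := by simp only [Matrix.mul_assoc]
      _ = V * Vᵀ := by rw [hV, Matrix.mul_one]
  have hKs : (P * S)ᵀ = P * S := hp4
  have hKi : (P * S) * (P * S) = P * S := by
    calc (P * S) * (P * S) = (P * S * P) * S := by simp only [Matrix.mul_assoc]
      _ = P * S := by rw [hp2]
  have h1mQs : (1 - Q)ᵀ = 1 - Q := by
    rw [Matrix.transpose_sub, Matrix.transpose_one, hQs]
  have h1mQi : (1 - Q) * (1 - Q) = 1 - Q := by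
    rw [Matrix.mul_sub, Matrix.mul_one, Matrix.sub_mul, Matrix.one_mul, hQi]
    abel
  have hAkW : A * V * Vᵀ = A * W := by rw [hWdef, Matrix.mul_assoc]
  have hσ' : ∀ i, 1 - ε ≤ (Matrix.isHermitian_mul_conjTranspose_self S).eigenvalues i := hσ
  have hF0 : 0 ≤ frobSq (A - Qo * A) := RPAux.frobSq_nonneg _
  -- step: ‖E‖² ≤ F
  have hEF : frobSq (A - A * W) ≤ frobSq (A - Qo * A) := by
    have hrank : (Qo * A).rank ≤ k := by
      have h1 : Qo * A = Xopt * (Xoptᵀ * A) := by rw [hQodef, Matrix.mul_assoc]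
      rw [h1]
      exact le_trans (Matrix.rank_mul_le_left _ _) (Matrix.rank_le_width Xopt)
    have hn := hbest (Qo * A) hrank
    rw [hAkW] at hn
    have h2 := pow_le_pow_left₀ (RPAux.frobNorm_nonneg (A - A * W)) hn 2
    rwa [RPAux.frobNorm_sq, RPAux.frobNorm_sq] at h2
  -- Pythagoras decomposition of A - Q A
  have hsum : A - Q * A = (1 - Q) * (A * W) + (1 - Q) * (A - A * W) := by
    rw [← Matrix.mul_add, add_sub_cancel, Matrix.sub_mul, Matrix.one_mul]
  have hinner : Matrix.trace (((1 - Q) * (A * W))ᵀ * ((1 - Q) * (A - A * W))) = 0 := by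
    have hAW : A - A * W = A * (1 - W) := by rw [Matrix.mul_sub, Matrix.mul_one]
    have hWz : (1 - W) * W = 0 := by
      rw [Matrix.sub_mul, Matrix.one_mul, hWi, sub_self]
    have e1 : ((1 - Q) * (A * W))ᵀ * ((1 - Q) * (A - A * W))
        = W * (Aᵀ * ((1 - Q) * (A * (1 - W)))) := by
      rw [hAW, Matrix.transpose_mul, Matrix.transpose_mul, h1mQs, hWs]
      simp only [Matrix.mul_assoc]
      rw [← Matrix.mul_assoc (1 - Q) (1 - Q), h1mQi]
    rw [e1, Matrix.trace_mul_comm]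
    have e2 : Aᵀ * ((1 - Q) * (A * (1 - W))) * W
        = Aᵀ * ((1 - Q) * (A * ((1 - W) * W))) := by
      simp only [Matrix.mul_assoc]
    rw [e2, hWz, Matrix.mul_zero, Matrix.mul_zero, Matrix.mul_zero, Matrix.trace_zero]
  have hPyth : frobSq (A - Q * A)
      = frobSq ((1 - Q) * (A * W)) + frobSq ((1 - Q) * (A - A * W)) := by
    rw [hsum]; exact RPAux.pythagoras _ _ hinner
  -- triangle step
  have hTri : frobNorm ((1 - Q) * (A * W))
      ≤ frobNorm ((1 - Q) * (A * R * P * Vᵀ)) + 3 * ε * frobNorm (A - A * W) := by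
    have hsplit2 : (1 - Q) * (A * W)
        = (1 - Q) * (A * R * P * Vᵀ) + (1 - Q) * (A * W - A * R * P * Vᵀ) := by
      rw [← Matrix.mul_add, add_sub_cancel]
    have ht := RPAux.frobNorm_add_le ((1 - Q) * (A * R * P * Vᵀ))
      ((1 - Q) * (A * W - A * R * P * Vᵀ))
    have hc1 : frobNorm ((1 - Q) * (A * W - A * R * P * Vᵀ))
        ≤ frobNorm (A * W - A * R * P * Vᵀ) :=
      Real.sqrt_le_sqrt (RPAux.frobSq_proj_le Q hQs hQi _)
    rw [hAkW] at hEtilde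
    rw [hsplit2]
    calc frobNorm ((1 - Q) * (A * R * P * Vᵀ) + (1 - Q) * (A * W - A * R * P * Vᵀ))
        ≤ frobNorm ((1 - Q) * (A * R * P * Vᵀ))
          + frobNorm ((1 - Q) * (A * W - A * R * P * Vᵀ)) := ht
      _ ≤ frobNorm ((1 - Q) * (A * R * P * Vᵀ)) + frobNorm (A * W - A * R * P * Vᵀ) := by
          linarith
      _ ≤ frobNorm ((1 - Q) * (A * R * P * Vᵀ)) + 3 * ε * frobNorm (A - A * W) := by
          linarith
  -- spectral step
  have hu2eq : frobSq ((1 - Q) * (A * R * P * Vᵀ)) = frobSq ((1 - Q) * (A * R) * P) := by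
    have e3 : (1 - Q) * (A * R * P * Vᵀ) = ((1 - Q) * (A * R) * P) * Vᵀ := by
      simp only [Matrix.mul_assoc]
    rw [e3]
    exact RPAux.frobSq_mul_orth _ V hV
  have hsv : (1 - ε) * frobSq ((1 - Q) * (A * R) * P)
      ≤ frobSq ((1 - Q) * (A * R)) := by
    have h1 := RPAux.frobSq_mul_sv_lower S (1 - ε) hσ' ((1 - Q) * (A * R) * P)
    have h2 : (1 - Q) * (A * R) * P * S = (1 - Q) * (A * R) * (P * S) := by
      rw [Matrix.mul_assoc]
    have h3 : frobSq ((1 - Q) * (A * R) * (P * S)) ≤ frobSq ((1 - Q) * (A * R)) :=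
      RPAux.frobSq_mul_proj_le (P * S) hKs hKi _
    rw [h2] at h1
    linarith
  -- bound on t := frobSq ((1-Q)(AR))
  have hQAR : A * R - Q * (A * R) = (1 - Q) * (A * R) := by
    rw [Matrix.sub_mul, Matrix.one_mul]
  have hQoAR : A * R - Qo * (A * R) = (1 - Qo) * (A * R) := by
    rw [Matrix.sub_mul, Matrix.one_mul]
  have hQoA : A - Qo * A = (1 - Qo) * A := by
    rw [Matrix.sub_mul, Matrix.one_mul]
  have ht : frobSq ((1 - Q) * (A * R)) ≤ γ * ((1 + ε) * frobSq (A - Qo * A)) := by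
    have hinf : 𝒳.inf' hne (fun X => frobSq (A * R - X * Xᵀ * (A * R)))
        ≤ frobSq (A * R - Qo * (A * R)) := by
      have := Finset.inf'_le (fun X : Matrix (Fin m) (Fin k) ℝ =>
        frobSq (A * R - X * Xᵀ * (A * R))) hXopt
      rw [hQodef]; exact this
    have h2 : frobSq (A * R - Qo * (A * R)) ≤ (1 + ε) * frobSq (A - Qo * A) := by
      rw [hQoAR, hQoA]
      exact hAR
    rw [hQAR] at happrox
    have h3 : γ * 𝒳.inf' hne (fun X => frobSq (A * R - X * Xᵀ * (A * R)))
        ≤ γ * ((1 + ε) * frobSq (A - Qo * A)) := by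
      apply mul_le_mul_of_nonneg_left _ (by linarith)
      linarith
    linarith
  -- numeric endgame
  set F : ℝ := frobSq (A - Qo * A) with hFdef
  set e : ℝ := frobNorm (A - A * W) with hedef
  set u : ℝ := frobNorm ((1 - Q) * (A * R * P * Vᵀ)) with hudef
  set b : ℝ := frobNorm ((1 - Q) * (A * W)) with hbdef
  set t : ℝ := frobSq ((1 - Q) * (A * R)) with htdef
  set s : ℝ := frobSq ((1 - Q) * (A - A * W)) with hsdef
  have he0 : 0 ≤ e := RPAux.frobNorm_nonneg _
  have hu0 : 0 ≤ u := RPAux.frobNorm_nonneg _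
  have hb0 : 0 ≤ b := RPAux.frobNorm_nonneg _
  have f1 : e ^ 2 ≤ F := by rw [hedef, RPAux.frobNorm_sq]; exact hEF
  have f3 : s ≤ e ^ 2 := by
    rw [hsdef, hedef, RPAux.frobNorm_sq]
    exact RPAux.frobSq_proj_le Q hQs hQi _
  have f2 : frobSq (A - Q * A) = b ^ 2 + s := by
    rw [hbdef, RPAux.frobNorm_sq]; exact hPyth
  have f5 : (1 - ε) * u ^ 2 ≤ t := by
    rw [hudef, RPAux.frobNorm_sq, hu2eq]
    exact hsv
  have f6 : t ≤ γ * ((1 + ε) * F) := ht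
  rw [f2]
  exact RPAux.numeric_endgame hε0 hε1 hγ hF0 he0 hu0 hb0 f1 f3 hTri f5 f6
end

section
/- Let Y ∈ ℝ^{m×n} be a fixed nonzero matrix, let ε > 0, let k ≥ 2 be an integer, and let r be an integer with r ≥ 100 k / ε². Let R ∈ ℝ^{n×r} be a random matrix whose entries are independent and take each of the values +1/√r and −1/√r with probability 1/2. Then P( ‖Y R‖_F² ≥ (1 + ε) ‖Y‖_F² ) ≤ 0.01. -/
open Matrix MeasureTheory ProbabilityTheory

set_option maxHeartbeats 2000000 in
/-- A rescaled random sign matrix barely expands the Frobenius norm: for a fixed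
nonzero Y and r ≥ 100 k / ε², P(‖Y R‖_F² ≥ (1+ε) ‖Y‖_F²) ≤ 0.01. -/
theorem random_sign_frobSq_bound {m n : ℕ}
    (Y : Matrix (Fin m) (Fin n) ℝ) (hY : Y ≠ 0)
    (ε : ℝ) (hε : 0 < ε)
    (k : ℕ) (hk : 2 ≤ k)
    (r : ℕ) (hr : (100 * k : ℝ) / ε ^ 2 ≤ r)
    {Ω' : Type} [MeasurableSpace Ω'] (μ : Measure Ω') [IsProbabilityMeasure μ]
    (R : Ω' → Matrix (Fin n) (Fin r) ℝ)
    (hmeas : ∀ i j, Measurable fun ω => R ω i j)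
    (hindep : iIndepFun
      (fun (q : Fin n × Fin r) ω => R ω q.1 q.2) μ)
    (hlaw1 : ∀ i j, μ {ω | R ω i j = 1 / Real.sqrt r} = 1 / 2)
    (hlaw2 : ∀ i j, μ {ω | R ω i j = -(1 / Real.sqrt r)} = 1 / 2) :
    μ {ω | (1 + ε) * frobSq Y ≤ frobSq (Y * R ω)} ≤ ENNReal.ofReal 0.01 := by
  have hk2 : (2:ℝ) ≤ (k:ℝ) := by exact_mod_cast hk
  have hrR : (0:ℝ) < r := lt_of_lt_of_le (div_pos (by nlinarith) (by positivity)) hr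
  set c : ℝ := 1 / Real.sqrt r with hc_def
  have hsr : 0 < Real.sqrt r := Real.sqrt_pos.2 hrR
  have hc : 0 < c := by positivity
  have hc2 : c ^ 2 = 1 / (r:ℝ) := by
    rw [hc_def, div_pow, one_pow, Real.sq_sqrt hrR.le]
  set f : Fin n × Fin r → Ω' → ℝ := fun q ω => R ω q.1 q.2 with hf_def
  have hfm : ∀ q, Measurable (f q) := fun q => hmeas q.1 q.2
  -- a.e. values
  have hval : ∀ q : Fin n × Fin r, ∀ᵐ ω ∂μ, f q ω = c ∨ f q ω = -c := by
    intro q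
    have hS1m : MeasurableSet {ω | R ω q.1 q.2 = c} :=
      (hmeas q.1 q.2) (measurableSet_singleton c)
    have hS2m : MeasurableSet {ω | R ω q.1 q.2 = -c} :=
      (hmeas q.1 q.2) (measurableSet_singleton (-c))
    have hdisj : Disjoint {ω | R ω q.1 q.2 = c} {ω | R ω q.1 q.2 = -c} := by
      rw [Set.disjoint_left]
      intro ω h1 h2
      simp only [Set.mem_setOf_eq] at h1 h2
      rw [h1] at h2; nlinarith
    have hu : μ ({ω | R ω q.1 q.2 = c} ∪ {ω | R ω q.1 q.2 = -c}) = 1 := by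
      rw [measure_union hdisj hS2m, hlaw1 q.1 q.2, hlaw2 q.1 q.2]
      exact ENNReal.add_halves 1
    have hcompl : μ ({ω | R ω q.1 q.2 = c} ∪ {ω | R ω q.1 q.2 = -c})ᶜ = 0 := by
      have h := measure_compl (hS1m.union hS2m) (measure_ne_top μ _)
      rw [hu, measure_univ] at h
      simpa using h
    rw [ae_iff]
    refine measure_mono_null ?_ hcompl
    intro ω hω
    simp only [Set.mem_setOf_eq, Set.mem_compl_iff, Set.mem_union] at hω ⊢
    tauto
  have hsq : ∀ q : Fin n × Fin r, ∀ᵐ ω ∂μ, (f q ω) ^ 2 = 1 / (r:ℝ) := by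
    intro q
    filter_upwards [hval q] with ω h
    rcases h with h | h <;> rw [h]
    · exact hc2
    · rw [neg_pow, pow_succ, pow_one]; simpa using hc2
  have habs : ∀ q : Fin n × Fin r, ∀ᵐ ω ∂μ, |f q ω| ≤ c := by
    intro q
    filter_upwards [hval q] with ω h
    rcases h with h | h <;> simp [h, abs_of_nonneg hc.le]
  have hIntb : ∀ (g : Ω' → ℝ) (C : ℝ), Measurable g → (∀ᵐ ω ∂μ, |g ω| ≤ C) →
      Integrable g μ := fun g C hg hb =>
    (integrable_const C).mono' hg.aestronglyMeasurable
      (by simpa [Real.norm_eq_abs] using hb)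
  have hfi : ∀ q, Integrable (f q) μ := fun q => hIntb _ c (hfm q) (habs q)
  -- mean zero
  have hmean : ∀ q : Fin n × Fin r, ∫ ω, f q ω ∂μ = 0 := by
    intro q
    have hS1m : MeasurableSet {ω | R ω q.1 q.2 = c} :=
      (hmeas q.1 q.2) (measurableSet_singleton c)
    have hS2m : MeasurableSet {ω | R ω q.1 q.2 = -c} :=
      (hmeas q.1 q.2) (measurableSet_singleton (-c))
    have hfeq : f q =ᵐ[μ] fun ω =>
        Set.indicator {ω | R ω q.1 q.2 = c} (fun _ => c) ω
          + Set.indicator {ω | R ω q.1 q.2 = -c} (fun _ => -c) ω := by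
      filter_upwards [hval q] with ω h
      rcases h with h | h
      · have hmem : ω ∈ {ω | R ω q.1 q.2 = c} := h
        have hnot : ω ∉ {ω | R ω q.1 q.2 = -c} := by
          intro hh
          have h2 : R ω q.1 q.2 = -c := hh
          have h1 : R ω q.1 q.2 = c := h
          rw [h1] at h2; nlinarith
        rw [Set.indicator_of_mem hmem, Set.indicator_of_notMem hnot]
        simpa using h
      · have hmem : ω ∈ {ω | R ω q.1 q.2 = -c} := h
        have hnot : ω ∉ {ω | R ω q.1 q.2 = c} := by
          intro hh
          have h2 : R ω q.1 q.2 = c := hh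
          have h1 : R ω q.1 q.2 = -c := h
          rw [h1] at h2; nlinarith
        rw [Set.indicator_of_notMem hnot, Set.indicator_of_mem hmem]
        simpa using h
    rw [integral_congr_ae hfeq, integral_add
      ((integrable_const c).indicator hS1m) ((integrable_const (-c)).indicator hS2m),
      integral_indicator_const _ hS1m, integral_indicator_const _ hS2m,
      measureReal_def, measureReal_def, hlaw1 q.1 q.2, hlaw2 q.1 q.2]
    norm_num
  -- pair product
  have hL0 : ∀ q1 q2 : Fin n × Fin r, q1 ≠ q2 → ∫ ω, f q1 ω * f q2 ω ∂μ = 0 := by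
    intro q1 q2 hne
    have h := (hindep.indepFun hne).integral_mul_eq_mul_integral
      (hfm q1).aestronglyMeasurable (hfm q2).aestronglyMeasurable
    rw [show (fun ω => f q1 ω * f q2 ω) = f q1 * f q2 from rfl] at *
    rw [h, hmean q1, hmean q2, mul_zero]
  -- four-factor integrals
  have hconst : ∀ (x : ℝ), ∫ _ω, x ∂μ = x := fun x => by
    simp [integral_const]
  have hW : ∀ q1 q2 q3 q4 : Fin n × Fin r, q1 ≠ q2 → q3 ≠ q4 →
      ∫ ω, (f q1 ω * f q2 ω) * (f q3 ω * f q4 ω) ∂μ =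
      if (q1 = q3 ∧ q2 = q4) ∨ (q1 = q4 ∧ q2 = q3) then (1/(r:ℝ))^2 else 0 := by
    intro q1 q2 q3 q4 h12 h34
    by_cases h13 : q1 = q3
    · subst h13
      by_cases h24 : q2 = q4
      · subst h24
        rw [if_pos (Or.inl ⟨rfl, rfl⟩)]
        have he : (fun ω => (f q1 ω * f q2 ω) * (f q1 ω * f q2 ω)) =ᵐ[μ]
            fun _ω => (1/(r:ℝ))^2 := by
          filter_upwards [hsq q1, hsq q2] with ω h1 h2
          have : (f q1 ω * f q2 ω) * (f q1 ω * f q2 ω) = f q1 ω ^2 * f q2 ω ^2 := by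
            ring
          rw [this, h1, h2]; ring
        rw [integral_congr_ae he, hconst]
      · have hcond : ¬((q1 = q1 ∧ q2 = q4) ∨ (q1 = q4 ∧ q2 = q1)) := by
          rintro (⟨_, h⟩ | ⟨h1, h2⟩)
          · exact h24 h
          · exact h12 h2.symm
        rw [if_neg hcond]
        have he : (fun ω => (f q1 ω * f q2 ω) * (f q1 ω * f q4 ω)) =ᵐ[μ]
            fun ω => (1/(r:ℝ)) * (f q2 ω * f q4 ω) := by
          filter_upwards [hsq q1] with ω h1
          have : (f q1 ω * f q2 ω) * (f q1 ω * f q4 ω)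
              = f q1 ω ^2 * (f q2 ω * f q4 ω) := by ring
          rw [this, h1]
        rw [integral_congr_ae he, integral_const_mul, hL0 q2 q4 h24, mul_zero]
    · by_cases h14 : q1 = q4
      · subst h14
        by_cases h23 : q2 = q3
        · subst h23
          rw [if_pos (Or.inr ⟨rfl, rfl⟩)]
          have he : (fun ω => (f q1 ω * f q2 ω) * (f q2 ω * f q1 ω)) =ᵐ[μ]
              fun _ω => (1/(r:ℝ))^2 := by
            filter_upwards [hsq q1, hsq q2] with ω h1 h2
            have : (f q1 ω * f q2 ω) * (f q2 ω * f q1 ω) = f q1 ω ^2 * f q2 ω ^2 := by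
              ring
            rw [this, h1, h2]; ring
          rw [integral_congr_ae he, hconst]
        · have hcond : ¬((q1 = q3 ∧ q2 = q1) ∨ (q1 = q1 ∧ q2 = q3)) := by
            rintro (⟨h1, h2⟩ | ⟨_, h⟩)
            · exact h12 h2.symm
            · exact h23 h
          rw [if_neg hcond]
          have he : (fun ω => (f q1 ω * f q2 ω) * (f q3 ω * f q1 ω)) =ᵐ[μ]
              fun ω => (1/(r:ℝ)) * (f q2 ω * f q3 ω) := by
            filter_upwards [hsq q1] with ω h1
            have : (f q1 ω * f q2 ω) * (f q3 ω * f q1 ω)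
                = f q1 ω ^2 * (f q2 ω * f q3 ω) := by ring
            rw [this, h1]
          rw [integral_congr_ae he, integral_const_mul, hL0 q2 q3 h23, mul_zero]
      · have hcond : ¬((q1 = q3 ∧ q2 = q4) ∨ (q1 = q4 ∧ q2 = q3)) := by
          rintro (⟨h, _⟩ | ⟨h, _⟩)
          · exact h13 h
          · exact h14 h
        rw [if_neg hcond]
        by_cases h23 : q2 = q3
        · subst h23
          have he : (fun ω => (f q1 ω * f q2 ω) * (f q2 ω * f q4 ω)) =ᵐ[μ]
              fun ω => (1/(r:ℝ)) * (f q1 ω * f q4 ω) := by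
            filter_upwards [hsq q2] with ω h2
            have : (f q1 ω * f q2 ω) * (f q2 ω * f q4 ω)
                = f q2 ω ^2 * (f q1 ω * f q4 ω) := by ring
            rw [this, h2]
          rw [integral_congr_ae he, integral_const_mul, hL0 q1 q4 h14, mul_zero]
        · by_cases h24 : q2 = q4
          · subst h24
            have he : (fun ω => (f q1 ω * f q2 ω) * (f q3 ω * f q2 ω)) =ᵐ[μ]
                fun ω => (1/(r:ℝ)) * (f q1 ω * f q3 ω) := by
              filter_upwards [hsq q2] with ω h2
              have : (f q1 ω * f q2 ω) * (f q3 ω * f q2 ω)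
                  = f q2 ω ^2 * (f q1 ω * f q3 ω) := by ring
              rw [this, h2]
            rw [integral_congr_ae he, integral_const_mul, hL0 q1 q3 h13, mul_zero]
          · have hind : IndepFun (f q1 * f q2) (f q3 * f q4) μ :=
              hindep.indepFun_mul_mul hfm q1 q2 q3 q4 h13 h14 h23 h24
            have h := hind.integral_mul_eq_mul_integral
              ((hfm q1).mul (hfm q2)).aestronglyMeasurable
              ((hfm q3).mul (hfm q4)).aestronglyMeasurable
            have h2 : (∫ ω, f q1 ω * f q2 ω * (f q3 ω * f q4 ω) ∂μ)
                = integral μ (f q1 * f q2 * (f q3 * f q4)) := rfl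
            have h3 : integral μ (f q1 * f q2) = 0 := hL0 q1 q2 h12
            rw [h2, h, h3, zero_mul]
  -- Z and its second moment
  set aY : Fin n → Fin n → ℝ := fun l l' => ∑ i, Y i l * Y i l' with haY_def
  have hsym : ∀ l l', aY l l' = aY l' l := fun l l' =>
    Finset.sum_congr rfl (fun i _ => mul_comm _ _)
  set T : Finset (Fin r × Fin n × Fin n) :=
    Finset.univ ×ˢ Finset.univ.offDiag with hT_def
  set W : Fin r × Fin n × Fin n → Ω' → ℝ :=
    fun t ω => f (t.2.1, t.1) ω * f (t.2.2, t.1) ω with hW_def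
  set Z : Ω' → ℝ := fun ω => ∑ t ∈ T, aY t.2.1 t.2.2 * W t ω with hZ_def
  have hTmem : ∀ t ∈ T, t.2.1 ≠ t.2.2 := by
    intro t ht
    rw [hT_def, Finset.mem_product, Finset.mem_offDiag] at ht
    exact ht.2.2.2
  have hWm : ∀ t, Measurable (W t) := fun t => (hfm _).mul (hfm _)
  have hWb : ∀ t, ∀ᵐ ω ∂μ, |W t ω| ≤ c * c := by
    intro t
    filter_upwards [habs (t.2.1, t.1), habs (t.2.2, t.1)] with ω h1 h2
    rw [hW_def]
    rw [abs_mul]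
    exact mul_le_mul h1 h2 (abs_nonneg _) hc.le
  have hWW : ∀ t ∈ T, ∀ t' ∈ T, ∫ ω, W t ω * W t' ω ∂μ =
      if t' = t ∨ t' = (t.1, t.2.2, t.2.1) then (1/(r:ℝ))^2 else 0 := by
    intro t ht t' ht'
    have h12 : ((t.2.1, t.1) : Fin n × Fin r) ≠ (t.2.2, t.1) := by
      intro h; exact hTmem t ht (congrArg Prod.fst h)
    have h34 : ((t'.2.1, t'.1) : Fin n × Fin r) ≠ (t'.2.2, t'.1) := by
      intro h; exact hTmem t' ht' (congrArg Prod.fst h)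
    have key := hW _ _ _ _ h12 h34
    rw [hW_def]
    rw [key]
    have hiff : ((t.2.1, t.1) = ((t'.2.1, t'.1) : Fin n × Fin r) ∧
          (t.2.2, t.1) = ((t'.2.2, t'.1) : Fin n × Fin r)) ∨
        ((t.2.1, t.1) = ((t'.2.2, t'.1) : Fin n × Fin r) ∧
          (t.2.2, t.1) = ((t'.2.1, t'.1) : Fin n × Fin r)) ↔
        (t' = t ∨ t' = (t.1, t.2.2, t.2.1)) := by
      simp only [Prod.ext_iff]
      constructor
      · rintro (⟨⟨a1, a2⟩, ⟨b1, b2⟩⟩ | ⟨⟨a1, a2⟩, ⟨b1, b2⟩⟩)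
        · exact Or.inl ⟨a2.symm, a1.symm, b1.symm⟩
        · exact Or.inr ⟨a2.symm, b1.symm, a1.symm⟩
      · rintro (⟨a1, a2, a3⟩ | ⟨a1, a2, a3⟩)
        · exact Or.inl ⟨⟨a2.symm, a1.symm⟩, ⟨a3.symm, a1.symm⟩⟩
        · exact Or.inr ⟨⟨a3.symm, a1.symm⟩, ⟨a2.symm, a1.symm⟩⟩
    exact if_congr hiff rfl rfl
  have hPi : ∀ t t', Integrable (fun ω =>
      (aY t.2.1 t.2.2 * aY t'.2.1 t'.2.2) * (W t ω * W t' ω)) μ := by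
    intro t t'
    refine hIntb _ (|aY t.2.1 t.2.2 * aY t'.2.1 t'.2.2| * (c * c * (c * c)))
      (measurable_const.mul ((hWm t).mul (hWm t'))) ?_
    filter_upwards [hWb t, hWb t'] with ω h1 h2
    rw [abs_mul]
    refine mul_le_mul_of_nonneg_left ?_ (abs_nonneg _)
    rw [abs_mul]
    exact mul_le_mul h1 h2 (abs_nonneg _) (by positivity)
  have hZsq : ∀ ω, Z ω ^ 2 = ∑ t ∈ T, ∑ t' ∈ T,
      (aY t.2.1 t.2.2 * aY t'.2.1 t'.2.2) * (W t ω * W t' ω) := by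
    intro ω
    rw [hZ_def]
    rw [sq, Finset.sum_mul_sum]
    refine Finset.sum_congr rfl fun t _ => Finset.sum_congr rfl fun t' _ => by ring
  have hintZ2 : ∫ ω, Z ω ^ 2 ∂μ = ∑ t ∈ T, ∑ t' ∈ T,
      (aY t.2.1 t.2.2 * aY t'.2.1 t'.2.2) * ∫ ω, W t ω * W t' ω ∂μ := by
    simp_rw [hZsq]
    rw [integral_finset_sum T (fun t _ => integrable_finset_sum T (fun t' _ => hPi t t'))]
    refine Finset.sum_congr rfl fun t _ => ?_
    rw [integral_finset_sum T (fun t' _ => hPi t t')]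
    refine Finset.sum_congr rfl fun t' _ => ?_
    exact integral_const_mul _ _
  set S : ℝ := ∑ p ∈ Finset.univ.offDiag, (aY p.1 p.2) ^ 2 with hS_def
  have hZ2val : ∫ ω, Z ω ^ 2 ∂μ = 2 * S / (r:ℝ) := by
    rw [hintZ2]
    have hstep : ∀ t ∈ T, ∑ t' ∈ T,
        (aY t.2.1 t.2.2 * aY t'.2.1 t'.2.2) * ∫ ω, W t ω * W t' ω ∂μ
        = 2 * (aY t.2.1 t.2.2)^2 * (1/(r:ℝ))^2 := by
      intro t ht
      have hσT : (t.1, t.2.2, t.2.1) ∈ T := by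
        rw [hT_def, Finset.mem_product, Finset.mem_offDiag]
        exact ⟨Finset.mem_univ _, Finset.mem_univ _, Finset.mem_univ _,
          (hTmem t ht).symm⟩
      have hneσ : t ≠ (t.1, t.2.2, t.2.1) := by
        intro h
        exact hTmem t ht (congrArg (fun x => x.2.1) h)
      calc ∑ t' ∈ T, (aY t.2.1 t.2.2 * aY t'.2.1 t'.2.2) * ∫ ω, W t ω * W t' ω ∂μ
          = ∑ t' ∈ T,
            ((if t' = t then aY t.2.1 t.2.2 * aY t'.2.1 t'.2.2 * (1/(r:ℝ))^2 else 0)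
            + (if t' = (t.1, t.2.2, t.2.1) then
                aY t.2.1 t.2.2 * aY t'.2.1 t'.2.2 * (1/(r:ℝ))^2 else 0)) := by
            refine Finset.sum_congr rfl fun t' ht' => ?_
            rw [hWW t ht t' ht']
            by_cases hp : t' = t <;> by_cases hq : t' = (t.1, t.2.2, t.2.1)
            · exact absurd (hp.symm.trans hq) hneσ
            · rw [if_pos (Or.inl hp), if_pos hp, if_neg hq, add_zero]
            · rw [if_pos (Or.inr hq), if_neg hp, if_pos hq, zero_add]
            · rw [if_neg ?_, if_neg hp, if_neg hq, add_zero, mul_zero]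
              rintro (h | h)
              exacts [hp h, hq h]
        _ = 2 * (aY t.2.1 t.2.2)^2 * (1/(r:ℝ))^2 := by
            rw [Finset.sum_add_distrib, Finset.sum_ite_eq' T t, Finset.sum_ite_eq' T _,
              if_pos ht, if_pos hσT]
            have := hsym t.2.2 t.2.1
            dsimp only
            rw [this]
            ring
    rw [Finset.sum_congr rfl hstep]
    have hTsum : ∑ t ∈ T, 2 * (aY t.2.1 t.2.2)^2 * (1/(r:ℝ))^2
        = (r:ℝ) * (2 * S * (1/(r:ℝ))^2) := by
      rw [hT_def, Finset.sum_product]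
      have h1 : ∑ p ∈ Finset.univ.offDiag, 2 * (aY p.1 p.2)^2 * (1/(r:ℝ))^2
          = 2 * S * (1/(r:ℝ))^2 := by
        rw [hS_def, Finset.mul_sum, Finset.sum_mul]
      dsimp only
      rw [h1, Finset.sum_const, Finset.card_univ, Fintype.card_fin, nsmul_eq_mul]
    rw [hTsum]
    field_simp
  -- Frobenius facts
  have haYd : ∀ l, aY l l = ∑ i, (Y i l)^2 := fun l =>
    Finset.sum_congr rfl fun i _ => (sq (Y i l)).symm
  have hFdiag : frobSq Y = ∑ l, aY l l := by
    rw [frobSq, Finset.sum_comm]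
    exact Finset.sum_congr rfl fun l _ => (haYd l).symm
  have hFpos : 0 < frobSq Y := by
    have hYne : ∃ i j, Y i j ≠ 0 := by
      by_contra h
      push_neg at h
      exact hY (Matrix.ext fun i j => h i j)
    obtain ⟨i0, j0, hij⟩ := hYne
    have h1 : (Y i0 j0)^2 ≤ ∑ j, (Y i0 j)^2 :=
      Finset.single_le_sum (f := fun j => (Y i0 j)^2)
        (fun j _ => sq_nonneg _) (Finset.mem_univ j0)
    have h2 : ∑ j, (Y i0 j)^2 ≤ ∑ i, ∑ j, (Y i j)^2 :=
      Finset.single_le_sum (f := fun i => ∑ j, (Y i j)^2)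
        (fun i _ => Finset.sum_nonneg fun j _ => sq_nonneg _) (Finset.mem_univ _)
    have h3 : 0 < (Y i0 j0)^2 := by positivity
    rw [frobSq]
    linarith
  have hCS : ∀ l l', (aY l l')^2 ≤ aY l l * aY l' l' := by
    intro l l'
    have h := Finset.sum_mul_sq_le_sq_mul_sq Finset.univ
      (fun i => Y i l) (fun i => Y i l')
    rw [haYd l, haYd l']
    exact h
  have hSle : S ≤ (frobSq Y)^2 := by
    have h1 : S ≤ ∑ p ∈ Finset.univ ×ˢ Finset.univ, (aY p.1 p.2)^2 := by
      rw [hS_def]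
      refine Finset.sum_le_sum_of_subset_of_nonneg ?_ (fun p _ _ => sq_nonneg _)
      intro p hp
      rw [Finset.mem_offDiag] at hp
      rw [Finset.mem_product]
      exact ⟨hp.1, hp.2.1⟩
    have h2 : ∑ p ∈ Finset.univ ×ˢ Finset.univ, (aY p.1 p.2)^2
        ≤ ∑ p ∈ Finset.univ ×ˢ Finset.univ, aY p.1 p.1 * aY p.2 p.2 :=
      Finset.sum_le_sum fun p _ => hCS p.1 p.2
    have h3 : ∑ p ∈ Finset.univ ×ˢ Finset.univ, aY p.1 p.1 * aY p.2 p.2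
        = (∑ l, aY l l)^2 := by
      simp only [Finset.sum_product, pow_two, Finset.sum_mul_sum]
    rw [hFdiag]
    linarith
  -- a.e. pointwise identity
  have hallsq : ∀ᵐ ω ∂μ, ∀ q : Fin n × Fin r, f q ω ^ 2 = 1/(r:ℝ) :=
    (MeasureTheory.ae_all_iff).2 hsq
  have hZae : ∀ᵐ ω ∂μ, frobSq (Y * R ω) = frobSq Y + Z ω := by
    filter_upwards [hallsq] with ω hω
    have hsqsum : ∀ (g : Fin n → ℝ), (∑ l, g l)^2
        = ∑ p ∈ Finset.univ ×ˢ Finset.univ, g p.1 * g p.2 := by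
      intro g
      simp only [Finset.sum_product, pow_two, Finset.sum_mul_sum]
    have hsplit : ∀ (h : Fin n × Fin n → ℝ),
        ∑ p ∈ Finset.univ ×ˢ Finset.univ, h p
        = (∑ l, h (l, l)) + ∑ p ∈ Finset.univ.offDiag, h p := by
      intro h
      rw [← Finset.diag_union_offDiag,
        Finset.sum_union (Finset.disjoint_diag_offDiag _), Finset.sum_diag]
    have hexp : frobSq (Y * R ω) = ∑ i, ∑ j,
        ((∑ l, (Y i l * f (l, j) ω) * (Y i l * f (l, j) ω))
          + ∑ p ∈ Finset.univ.offDiag,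
              (Y i p.1 * f (p.1, j) ω) * (Y i p.2 * f (p.2, j) ω)) := by
      rw [frobSq]
      refine Finset.sum_congr rfl fun i _ => Finset.sum_congr rfl fun j _ => ?_
      have : (Y * R ω) i j = ∑ l, Y i l * f (l, j) ω := Matrix.mul_apply
      rw [this, hsqsum, hsplit]
    have hdiag : ∀ i : Fin m, ∀ j : Fin r,
        (∑ l, (Y i l * f (l, j) ω) * (Y i l * f (l, j) ω)) = (∑ l, (Y i l)^2) / r := by
      intro i j
      rw [Finset.sum_div]
      refine Finset.sum_congr rfl fun l _ => ?_
      have h1 : (Y i l * f (l, j) ω) * (Y i l * f (l, j) ω)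
          = (Y i l)^2 * (f (l, j) ω)^2 := by ring
      rw [h1, hω (l, j)]
      ring
    rw [hexp]
    simp_rw [Finset.sum_add_distrib]
    have hpart1 : ∑ i, ∑ j : Fin r,
        (∑ l, (Y i l * f (l, j) ω) * (Y i l * f (l, j) ω)) = frobSq Y := by
      rw [frobSq]
      refine Finset.sum_congr rfl fun i _ => ?_
      simp_rw [hdiag i]
      rw [Finset.sum_const, Finset.card_univ, Fintype.card_fin, nsmul_eq_mul]
      rw [mul_div_cancel₀ _ (ne_of_gt hrR)]
    have hpart2 : ∑ i, ∑ j : Fin r, ∑ p ∈ Finset.univ.offDiag,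
        (Y i p.1 * f (p.1, j) ω) * (Y i p.2 * f (p.2, j) ω) = Z ω := by
      rw [hZ_def]
      dsimp only
      rw [hT_def, Finset.sum_product]
      rw [Finset.sum_comm]
      refine Finset.sum_congr rfl fun j _ => ?_
      rw [Finset.sum_comm]
      refine Finset.sum_congr rfl fun p _ => ?_
      rw [hW_def]
      dsimp only
      rw [haY_def]
      dsimp only
      rw [Finset.sum_mul]
      exact Finset.sum_congr rfl fun i _ => by ring
    rw [hpart1, hpart2]
  -- integrability of Z^2
  have hZm : Measurable Z := by
    rw [hZ_def]
    exact Finset.measurable_sum T fun t _ => (measurable_const.mul (hWm t))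
  set B : ℝ := ∑ t ∈ T, |aY t.2.1 t.2.2| * (c * c) with hB_def
  have hB0 : 0 ≤ B := Finset.sum_nonneg fun t _ => by positivity
  have hZb : ∀ᵐ ω ∂μ, |Z ω| ≤ B := by
    have hWball : ∀ᵐ ω ∂μ, ∀ t : Fin r × Fin n × Fin n, |W t ω| ≤ c * c :=
      (MeasureTheory.ae_all_iff).2 hWb
    filter_upwards [hWball] with ω hω
    rw [hZ_def]
    calc |∑ t ∈ T, aY t.2.1 t.2.2 * W t ω| ≤ ∑ t ∈ T, |aY t.2.1 t.2.2 * W t ω| :=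
          Finset.abs_sum_le_sum_abs _ _
      _ ≤ B := by
          rw [hB_def]
          refine Finset.sum_le_sum fun t _ => ?_
          rw [abs_mul]
          exact mul_le_mul_of_nonneg_left (hω t) (abs_nonneg _)
  have hZ2i : Integrable (fun ω => Z ω ^ 2) μ := by
    refine hIntb _ (B^2) (hZm.pow_const 2) ?_
    filter_upwards [hZb] with ω h
    rw [abs_pow]
    exact pow_le_pow_left₀ (abs_nonneg _) h 2
  -- Markov inequality conclusion
  have hSnn : 0 ≤ S := by
    rw [hS_def]; exact Finset.sum_nonneg fun p _ => sq_nonneg _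
  set t0 : ℝ := (ε * frobSq Y)^2 with ht0_def
  have ht0pos : 0 < t0 := by rw [ht0_def]; positivity
  have hev : {ω | (1 + ε) * frobSq Y ≤ frobSq (Y * R ω)}
      =ᵐ[μ] {ω | (1 + ε) * frobSq Y ≤ frobSq Y + Z ω} := by
    apply Filter.eventuallyEq_set.2
    filter_upwards [hZae] with ω h
    rw [h]
  have hmeq : μ {ω | (1 + ε) * frobSq Y ≤ frobSq (Y * R ω)}
      = μ {ω | (1 + ε) * frobSq Y ≤ frobSq Y + Z ω} := measure_congr hev
  have hsub : {ω | (1 + ε) * frobSq Y ≤ frobSq Y + Z ω}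
      ⊆ {ω | t0 ≤ Z ω ^ 2} := by
    intro ω h
    rw [Set.mem_setOf_eq] at h ⊢
    have h1 : ε * frobSq Y ≤ Z ω := by nlinarith
    rw [ht0_def]
    exact pow_le_pow_left₀ (by positivity) h1 2
  have hmar := mul_meas_ge_le_integral_of_nonneg
    (ae_of_all μ fun ω => sq_nonneg (Z ω)) hZ2i t0
  rw [hZ2val] at hmar
  have htoReal : (μ {ω | t0 ≤ Z ω ^ 2}).toReal ≤ (2 * S / (r:ℝ)) / t0 := by
    rw [le_div_iff₀ ht0pos]
    rw [measureReal_def] at hmar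
    linarith
  have hre : (200:ℝ) ≤ (r:ℝ) * ε^2 := by
    have h1 : (100 * k : ℝ) ≤ (r:ℝ) * ε ^ 2 := by
      rw [div_le_iff₀ (by positivity)] at hr
      linarith
    nlinarith
  have hfinal : (2 * S / (r:ℝ)) / t0 ≤ 0.01 := by
    rw [div_le_iff₀ ht0pos, div_le_iff₀ hrR, ht0_def]
    have hA : 200 * (frobSq Y)^2 ≤ ((r:ℝ) * ε^2) * (frobSq Y)^2 :=
      mul_le_mul_of_nonneg_right hre (sq_nonneg _)
    nlinarith [hSle]
  calc μ {ω | (1 + ε) * frobSq Y ≤ frobSq (Y * R ω)}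
      = μ {ω | (1 + ε) * frobSq Y ≤ frobSq Y + Z ω} := hmeq
    _ ≤ μ {ω | t0 ≤ Z ω ^ 2} := measure_mono hsub
    _ = ENNReal.ofReal ((μ {ω | t0 ≤ Z ω ^ 2}).toReal) :=
        (ENNReal.ofReal_toReal (measure_ne_top μ _)).symm
    _ ≤ ENNReal.ofReal 0.01 :=
        ENNReal.ofReal_le_ofReal (le_trans htoReal hfinal)
end
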